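/- arXiv:2107.02019 — 8 statements merged into one kernel-verified Lean document; each statement's English description precedes it below -/
import Mathlib

section
/- Let P be an n×n real matrix (n ≥ 2) with nonnegative entries that is column stochastic (every column sums to 1) and primitive (there exists k ≥ 1 such that every entry of P^k is strictly positive). Define the iterations y^{t+1} = P y^t with arbitrary initial vector y^0 ∈ ℝ^n, and x^{t+1} = P x^t with initial vector x^0 equal to the all-ones vector. Then for every index j ∈ {1,…,n}, the ratio μ_j^t = y_j^t / x_j^t converges, as t → ∞, to (Σ_{i=1}^n y_i^0)/n, i.e., each node asymptotically obtains the exact average of the initial values. -/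
/-!
Let `x t = P^t 𝟙` and `z t = P^t (y⁰ - A 𝟙)` with `A` the average of `y⁰`, so that
`y_j^t / x_j^t - A = z_j^t / x_j^t` and `∑ z t = 0` for all `t`. The componentwise bound
`|z t| ≤ δ • x t` is preserved by `P`, and if every entry of `P^k` is at least `ε > 0`, one
application of `P^k` improves `δ` to `(1 - ε) δ`: the nonnegative vector `δ • x - z` has sum
`δ ∑ x`, which `P^k` spreads over every coordinate with weight at least `ε`, while no coordinate
of `P^k x` exceeds `∑ x`. Hence
`|z_j^t| ≤ (1 - ε)^(t / k) δ x_j^t`, and `x_j^t ≥ ε n > 0` once `t ≥ k`.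
-/

open Filter Matrix

namespace Matrix

variable {ι : Type*} [Fintype ι] {Q P : Matrix ι ι ℝ} {x z : ι → ℝ} {ε δ : ℝ}

lemma mul_sum_le_mulVec_apply {i : ι} (hε : ∀ l, ε ≤ Q i l) (hx : ∀ l, 0 ≤ x l) :
    ε * ∑ l, x l ≤ (Q *ᵥ x) i := by
  rw [Finset.mul_sum]
  exact Finset.sum_le_sum fun l _ => mul_le_mul_of_nonneg_right (hε l) (hx l)

variable [DecidableEq ι]

lemma mulVec_apply_le_sum_of_mem_colStochastic (hQ : Q ∈ colStochastic ℝ ι)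
    (hx : ∀ l, 0 ≤ x l) (i : ι) : (Q *ᵥ x) i ≤ ∑ l, x l := by
  rw [← sum_mulVec_of_mem_colStochastic hQ]
  exact Finset.single_le_sum (fun l _ => nonneg_mulVec_of_mem_colStochastic hQ hx l)
    (Finset.mem_univ i)

lemma mulVec_apply_le_of_le_smul (hQ : Q ∈ colStochastic ℝ ι) (hε : ∀ i l, ε ≤ Q i l)
    (hε₀ : 0 ≤ ε) (hδ : 0 ≤ δ) (hx : ∀ l, 0 ≤ x l) (hz : ∑ l, z l = 0)
    (hzx : ∀ l, z l ≤ δ * x l) (i : ι) :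
    (Q *ᵥ z) i ≤ (1 - ε) * δ * (Q *ᵥ x) i := by
  have hgap := mul_sum_le_mulVec_apply (hε i) (x := δ • x - z) fun l => sub_nonneg.2 (hzx l)
  simp only [mulVec_sub, mulVec_smul, Pi.sub_apply, Pi.smul_apply, smul_eq_mul,
    Finset.sum_sub_distrib, ← Finset.mul_sum, hz, sub_zero] at hgap
  have hsum := mulVec_apply_le_sum_of_mem_colStochastic hQ hx i
  nlinarith [mul_le_mul_of_nonneg_left hsum (mul_nonneg hε₀ hδ)]

lemma abs_mulVec_apply_le_of_abs_le (hQ : Q ∈ colStochastic ℝ ι) (hε : ∀ i l, ε ≤ Q i l)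
    (hε₀ : 0 ≤ ε) (hδ : 0 ≤ δ) (hx : ∀ l, 0 ≤ x l) (hz : ∑ l, z l = 0)
    (hzx : ∀ l, |z l| ≤ δ * x l) (i : ι) :
    |(Q *ᵥ z) i| ≤ (1 - ε) * δ * (Q *ᵥ x) i := by
  have hneg : ∑ l, (-z) l = 0 := by simp [hz]
  have hupper := mulVec_apply_le_of_le_smul hQ hε hε₀ hδ hx hz
    (fun l => (le_abs_self _).trans (hzx l)) i
  have hlower := mulVec_apply_le_of_le_smul hQ hε hε₀ hδ hx hneg
    (fun l => (neg_le_abs _).trans (hzx l)) i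
  rw [mulVec_neg, Pi.neg_apply] at hlower
  exact abs_le.2 ⟨by linarith, hupper⟩

lemma abs_pow_mulVec_apply_le (hP : P ∈ colStochastic ℝ ι) {k : ℕ}
    (hε : ∀ i l, ε ≤ (P ^ k) i l) (hε₀ : 0 ≤ ε) (hδ : 0 ≤ δ) (hx : ∀ l, 0 ≤ x l)
    (hz : ∑ l, z l = 0) (hzx : ∀ l, |z l| ≤ δ * x l) (t : ℕ) (i : ι) :
    |(P ^ t *ᵥ z) i| ≤ (1 - ε) ^ (t / k) * δ * (P ^ t *ᵥ x) i := by
  have hε₁ : ε ≤ 1 := (hε i i).trans (le_one_of_mem_colStochastic (pow_mem hP k))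
  have hxt (s : ℕ) := nonneg_mulVec_of_mem_colStochastic (pow_mem hP s) hx
  have hzt (s : ℕ) : ∑ l, (P ^ s *ᵥ z) l = 0 := by
    rw [sum_mulVec_of_mem_colStochastic (pow_mem hP s), hz]
  have hmul (q : ℕ) :
      ∀ l, |(P ^ (k * q) *ᵥ z) l| ≤ (1 - ε) ^ q * δ * (P ^ (k * q) *ᵥ x) l := by
    induction q with
    | zero => simpa using hzx
    | succ q ih =>
      intro l
      have h := abs_mulVec_apply_le_of_abs_le (pow_mem hP k) hε hε₀
        (mul_nonneg (pow_nonneg (sub_nonneg.2 hε₁) q) hδ) (hxt _) (hzt _) ih l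
      rw [mulVec_mulVec, mulVec_mulVec, ← pow_add, ← mul_assoc, ← pow_succ'] at h
      rwa [mul_add_one, add_comm (k * q) k]
  -- with `ε = 0` this is just monotonicity, for the last `t % k` steps
  have hrest := abs_mulVec_apply_le_of_abs_le (pow_mem hP (t % k)) (ε := 0)
    (fun _ _ => nonneg_of_mem_colStochastic (pow_mem hP (t % k))) le_rfl
    (mul_nonneg (pow_nonneg (sub_nonneg.2 hε₁) _) hδ) (hxt _) (hzt _) (hmul (t / k)) i
  rwa [sub_zero, one_mul, mulVec_mulVec, mulVec_mulVec, ← pow_add, Nat.mod_add_div] at hrest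

lemma mul_sum_le_pow_mulVec_apply (hP : P ∈ colStochastic ℝ ι) {k t : ℕ}
    (hε : ∀ i l, ε ≤ (P ^ k) i l) (hx : ∀ l, 0 ≤ x l) (hkt : k ≤ t) (i : ι) :
    ε * ∑ l, x l ≤ (P ^ t *ᵥ x) i := by
  rw [← Nat.add_sub_of_le hkt, pow_add, ← mulVec_mulVec,
    ← sum_mulVec_of_mem_colStochastic (pow_mem hP (t - k)) (x := x)]
  exact mul_sum_le_mulVec_apply (hε i) (nonneg_mulVec_of_mem_colStochastic (pow_mem hP _) hx)

lemma abs_pow_mulVec_div_sub_average_le (hP : P ∈ colStochastic ℝ ι) {k t : ℕ}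
    (hε : ∀ i l, ε ≤ (P ^ k) i l) (hε₀ : 0 < ε) (y : ι → ℝ) (hkt : k ≤ t) (j : ι) :
    |(P ^ t *ᵥ y) j / (P ^ t *ᵥ 1) j - (∑ i, y i) / Fintype.card ι| ≤
      (1 - ε) ^ (t / k) * ∑ i, |y i - (∑ i, y i) / Fintype.card ι| := by
  have : Nonempty ι := ⟨j⟩
  set A := (∑ i, y i) / Fintype.card ι
  have hcard : (Fintype.card ι : ℝ) ≠ 0 := Nat.cast_ne_zero.2 Fintype.card_ne_zero
  have hx : ∀ l, (0 : ℝ) ≤ (1 : ι → ℝ) l := fun _ => zero_le_one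
  have hxpos : 0 < (P ^ t *ᵥ 1) j := by
    have h := mul_sum_le_pow_mulVec_apply hP hε hx hkt j
    simp only [Pi.one_apply, Finset.sum_const, Finset.card_univ, nsmul_eq_mul, mul_one] at h
    exact lt_of_lt_of_le (mul_pos hε₀ (Nat.cast_pos.2 Fintype.card_pos)) h
  have hz : ∑ l, (y - A • 1) l = 0 := by
    simp [Finset.sum_sub_distrib, A, mul_div_cancel₀ _ hcard]
  have hzx : ∀ l, |(y - A • 1) l| ≤ (∑ i, |y i - A|) * (1 : ι → ℝ) l := fun l => by
    simpa using Finset.single_le_sum (fun i _ => abs_nonneg (y i - A)) (Finset.mem_univ l)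
  have hbound := abs_pow_mulVec_apply_le hP hε hε₀.le
    (Finset.sum_nonneg fun i _ => abs_nonneg _) hx hz hzx t j
  have hdiff : (P ^ t *ᵥ y) j / (P ^ t *ᵥ 1) j - A =
      (P ^ t *ᵥ (y - A • 1)) j / (P ^ t *ᵥ 1) j := by
    rw [mulVec_sub, mulVec_smul, Pi.sub_apply, Pi.smul_apply, smul_eq_mul, sub_div,
      mul_div_cancel_right₀ _ hxpos.ne']
  rw [hdiff, abs_div, abs_of_pos hxpos, div_le_iff₀ hxpos]
  exact hbound

end Matrix

theorem ratio_consensus_asymptotic_average_general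
    (n : ℕ) (P : Matrix (Fin n) (Fin n) ℝ)
    (hnonneg : ∀ i j, 0 ≤ P i j)
    (hcol : ∀ j : Fin n, ∑ i : Fin n, P i j = 1)
    (hprim : ∃ k : ℕ, 1 ≤ k ∧ ∀ i j, 0 < (P ^ k) i j)
    (y0 : Fin n → ℝ) (j : Fin n) :
    Tendsto (fun t : ℕ => ((P ^ t) *ᵥ y0) j / ((P ^ t) *ᵥ (fun _ => (1 : ℝ))) j)
      atTop (nhds ((∑ i : Fin n, y0 i) / n)) := by
  obtain ⟨k, hk, hpos⟩ := hprim
  have hP : P ∈ colStochastic ℝ (Fin n) := mem_colStochastic_iff_sum.2 ⟨hnonneg, hcol⟩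
  have : Nonempty (Fin n) := ⟨j⟩
  obtain ⟨⟨i₀, l₀⟩, hmin⟩ := Finite.exists_min fun p : Fin n × Fin n => (P ^ k) p.1 p.2
  set ε := (P ^ k) i₀ l₀
  have hε₀ : 0 < ε := hpos i₀ l₀
  have hε₁ : ε ≤ 1 := le_one_of_mem_colStochastic (pow_mem hP k)
  have hrate : Tendsto (fun t => (1 - ε) ^ (t / k) * ∑ i, |y0 i - (∑ i, y0 i) / n|)
      atTop (nhds 0) := by
    have hpow := tendsto_pow_atTop_nhds_zero_of_lt_one (r := 1 - ε) (by linarith) (by linarith)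
    simpa using (hpow.comp (Nat.tendsto_div_const_atTop (Nat.one_le_iff_ne_zero.1 hk))).mul_const _
  rw [tendsto_iff_dist_tendsto_zero]
  refine squeeze_zero' (Eventually.of_forall fun _ => dist_nonneg) ?_ hrate
  filter_upwards [eventually_ge_atTop k] with t hkt
  rw [Real.dist_eq]
  have h := abs_pow_mulVec_div_sub_average_le hP (fun i l => hmin (i, l)) hε₀ y0 hkt j
  rw [Fintype.card_fin] at h
  exact h

/-- Ratio consensus, asymptotic average.
If `P` is an `n × n` nonnegative, column-stochastic, primitive matrix (`n ≥ 2`),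
`y t = P^t y⁰` with arbitrary `y⁰`, and `x t = P^t 𝟙`, then for every index `j`
the ratio `y_j^t / x_j^t` converges to `(∑ i, y⁰ i) / n`. -/
theorem ratio_consensus_asymptotic_average
    (n : ℕ) (hn : 2 ≤ n) (P : Matrix (Fin n) (Fin n) ℝ)
    (hnonneg : ∀ i j, 0 ≤ P i j)
    (hcol : ∀ j : Fin n, ∑ i : Fin n, P i j = 1)
    (hprim : ∃ k : ℕ, 1 ≤ k ∧ ∀ i j, 0 < (P ^ k) i j)
    (y0 : Fin n → ℝ) (j : Fin n) :
    Tendsto (fun t : ℕ => ((P ^ t) *ᵥ y0) j / ((P ^ t) *ᵥ (fun _ => (1 : ℝ))) j)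
      atTop (nhds ((∑ i : Fin n, y0 i) / n)) :=
  ratio_consensus_asymptotic_average_general n P hnonneg hcol hprim y0 j
end

section
/- Let P be an n×n real matrix, w^0 ∈ ℝ^n, and w^t = P^t w^0. Suppose q(z) = (z − 1)·p(z) is a monic real polynomial with e_jᵀ q(P) = 0, where p(z) = Σ_{i=0}^{M} β_i z^i and every complex root of p has modulus strictly less than 1. Then Σ_{i=0}^{M} β_i ≠ 0, the scalar sequence (w_j^t)_{t≥0} converges as t → ∞, and its limit equals (Σ_{i=0}^{M} β_i w_j^i) / (Σ_{i=0}^{M} β_i); that is, the asymptotic value at node j can be computed exactly from the first M+1 iterates w_j^0, …, w_j^M. -/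
/-! The sequence `w t = (P ^ t *ᵥ w0) j` satisfies the linear recurrence with characteristic
polynomial `q = (X - 1) * p`. Hence its differences satisfy the recurrence of `p`; as the roots of
`p` lie in the open unit disc, splitting off one root at a time shows that the differences decay
geometrically, so `w` converges to some `L`. On the other hand `p(shift) w` is annihilated by
`shift - 1`, so it is the constant `∑ βᵢ wᵢ`, and it tends to `p(1) L`, where `p(1) = ∑ βᵢ ≠ 0`
because `1` is not a root of `p`. -/

open Filter Matrix Finset Polynomial

/-- A sequence `v` satisfies the linear recurrence with characteristic polynomial `p` exactly
when `aeval (seqShift R) p v = 0`. -/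
abbrev seqShift (R : Type*) [CommSemiring R] : Module.End R (ℕ → R) :=
  LinearMap.funLeft R R (· + 1)

section CommSemiring

variable {R : Type*} [CommSemiring R]

theorem seqShift_pow_apply (i : ℕ) (v : ℕ → R) (t : ℕ) : (seqShift R ^ i) v t = v (t + i) := by
  induction i generalizing v t with
  | zero => rfl
  | succ i ih => rw [pow_succ, Module.End.mul_apply, ih]; rfl

theorem aeval_seqShift_apply {p : R[X]} {n : ℕ} (hn : p.natDegree < n) (v : ℕ → R) (t : ℕ) :
    aeval (seqShift R) p v t = ∑ i ∈ range n, p.coeff i * v (t + i) := by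
  simp [aeval_eq_sum_range' hn, LinearMap.sum_apply, seqShift_pow_apply]

theorem aeval_seqShift_map {S : Type*} [CommSemiring S] (φ : R →+* S) (p : R[X]) (v : ℕ → R) :
    aeval (seqShift S) (p.map φ) (φ ∘ v) = φ ∘ aeval (seqShift R) p v := by
  have hn : (p.map φ).natDegree < p.natDegree + 1 := Nat.lt_succ_of_le natDegree_map_le
  funext t
  simp [aeval_seqShift_apply hn, aeval_seqShift_apply (Nat.lt_succ_self _), coeff_map]

theorem aeval_seqShift_pow_apply {A : Type*} [Semiring A] [Algebra R A] (f : A →ₗ[R] R) (a : A)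
    (q : R[X]) (t : ℕ) : aeval (seqShift R) q (fun s => f (a ^ s)) t = f (aeval a q * a ^ t) := by
  simp [aeval_eq_sum_range, Finset.sum_mul, seqShift_pow_apply, ← pow_add, add_comm]

theorem tendsto_aeval_seqShift [TopologicalSpace R] [IsTopologicalSemiring R] (p : R[X])
    {v : ℕ → R} {L : R} (hv : Tendsto v atTop (nhds L)) :
    Tendsto (aeval (seqShift R) p v) atTop (nhds (p.eval 1 * L)) := by
  simp only [funext (aeval_seqShift_apply (Nat.lt_succ_self p.natDegree) v), eval_eq_sum_range,
    one_pow, mul_one, Finset.sum_mul]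
  exact tendsto_finsetSum _ fun i _ => (hv.comp (tendsto_add_atTop_nat i)).const_mul _

end CommSemiring

section CommRing

variable {R : Type*} [CommRing R]

theorem aeval_seqShift_X_sub_C_apply (a : R) (v : ℕ → R) (t : ℕ) :
    aeval (seqShift R) (X - C a) v t = v (t + 1) - a * v t := by
  simp [seqShift]

theorem apply_eq_apply_zero_of_aeval_seqShift_X_sub_one {u : ℕ → R}
    (hu : aeval (seqShift R) (X - 1 : R[X]) u = 0) (t : ℕ) : u t = u 0 := by
  induction t with
  | zero => rfl
  | succ t ih =>
    have := congrFun hu t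
    rw [← C_1, aeval_seqShift_X_sub_C_apply, Pi.zero_apply] at this
    rw [← ih]; linear_combination this
end CommRing

section Decay

variable {𝕜 : Type*} [NormedField 𝕜]

theorem exists_norm_le_mul_pow_of_norm_sub_mul_le {a : 𝕜} {r K : ℝ} (ha : ‖a‖ < r) {v : ℕ → 𝕜}
    (hv : ∀ t, ‖v (t + 1) - a * v t‖ ≤ K * r ^ t) : ∃ D, ∀ t, ‖v t‖ ≤ D * r ^ t := by
  set D := max ‖v 0‖ (K / (r - ‖a‖))
  have hKD : K + ‖a‖ * D ≤ D * r := by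
    have := (div_le_iff₀ (sub_pos.2 ha)).1 (le_max_right ‖v 0‖ (K / (r - ‖a‖)))
    linarith
  have hr : 0 ≤ r := (norm_nonneg a).trans ha.le
  refine ⟨D, fun t => ?_⟩
  induction t with
  | zero => simp [D]
  | succ t ih =>
    calc ‖v (t + 1)‖ = ‖(v (t + 1) - a * v t) + a * v t‖ := by rw [sub_add_cancel]
      _ ≤ K * r ^ t + ‖a‖ * (D * r ^ t) := by
        grw [norm_add_le, norm_mul, hv t, ih]
      _ = (K + ‖a‖ * D) * r ^ t := by ring
      _ ≤ D * r * r ^ t := by gcongr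
      _ = D * r ^ (t + 1) := by ring

theorem exists_norm_le_mul_pow_of_aeval_prod_X_sub_C_eq_zero {r : ℝ} (s : Multiset 𝕜)
    (hs : ∀ z ∈ s, ‖z‖ < r) {v : ℕ → 𝕜}
    (hv : aeval (seqShift 𝕜) (s.map fun z => X - C z).prod v = 0) :
    ∃ K, ∀ t, ‖v t‖ ≤ K * r ^ t := by
  induction s using Multiset.induction_on generalizing v with
  | empty => exact ⟨0, by simp_all⟩
  | cons a s ih =>
    rw [Multiset.map_cons, Multiset.prod_cons, mul_comm, map_mul, Module.End.mul_apply] at hv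
    obtain ⟨K, hK⟩ := ih (fun z hz => hs z (Multiset.mem_cons_of_mem hz)) hv
    refine exists_norm_le_mul_pow_of_norm_sub_mul_le (K := K) (hs a (Multiset.mem_cons_self a s))
      fun t => ?_
    rw [← aeval_seqShift_X_sub_C_apply]
    exact hK t

variable [IsAlgClosed 𝕜]

theorem exists_norm_le_mul_pow_of_aeval_seqShift_eq_zero {p : 𝕜[X]} (hp : p ≠ 0) {r : ℝ}
    (hroots : ∀ z ∈ p.roots, ‖z‖ < r) {v : ℕ → 𝕜} (hv : aeval (seqShift 𝕜) p v = 0) :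
    ∃ K, ∀ t, ‖v t‖ ≤ K * r ^ t := by
  rw [← C_leadingCoeff_mul_prod_multiset_X_sub_C (p := p) IsAlgClosed.card_roots_eq_natDegree,
    map_mul, Module.End.mul_apply, aeval_C, Module.algebraMap_end_apply, smul_eq_zero] at hv
  exact exists_norm_le_mul_pow_of_aeval_prod_X_sub_C_eq_zero _ hroots
    (hv.resolve_left (leadingCoeff_ne_zero.2 hp))

theorem summable_norm_of_aeval_seqShift_eq_zero {p : 𝕜[X]} (hp : p ≠ 0)
    (hroots : ∀ z ∈ p.roots, ‖z‖ < 1) {v : ℕ → 𝕜} (hv : aeval (seqShift 𝕜) p v = 0) :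
    Summable fun t => ‖v t‖ := by
  classical
  obtain ⟨r, hr, hr1⟩ := (insert 0 (p.roots.toFinset.image (‖·‖))).exists_between' {1} <| by
    simp only [mem_insert, mem_image, Multiset.mem_toFinset, mem_singleton, forall_eq]
    rintro x (rfl | ⟨z, hz, rfl⟩)
    exacts [one_pos, hroots z hz]
  simp only [mem_insert, mem_image, Multiset.mem_toFinset, mem_singleton, forall_eq] at hr hr1
  obtain ⟨K, hK⟩ :=
    exists_norm_le_mul_pow_of_aeval_seqShift_eq_zero hp (fun z hz => hr _ (.inr ⟨z, hz, rfl⟩)) hv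
  exact .of_nonneg_of_le (fun t => norm_nonneg _) hK
    ((summable_geometric_of_lt_one (hr 0 (.inl rfl)).le hr1).mul_left K)

end Decay

theorem summable_of_aeval_seqShift_eq_zero {p : ℝ[X]}
    (hroots : ∀ z : ℂ, (p.map (algebraMap ℝ ℂ)).IsRoot z → ‖z‖ < 1) {v : ℕ → ℝ}
    (hv : aeval (seqShift ℝ) p v = 0) : Summable v := by
  have hp : p.map (algebraMap ℝ ℂ) ≠ 0 := fun h => by simpa using hroots 1 (by simp [h])
  have hvℂ : aeval (seqShift ℂ) (p.map (algebraMap ℝ ℂ)) (algebraMap ℝ ℂ ∘ v) = 0 := by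
    rw [aeval_seqShift_map, hv]; rfl
  have := summable_norm_of_aeval_seqShift_eq_zero hp
    (fun z hz => hroots z (isRoot_of_mem_roots hz)) hvℂ
  exact .of_norm (by simpa using this)

theorem exists_tendsto_of_aeval_seqShift_X_sub_one_mul_eq_zero {p : ℝ[X]}
    (hroots : ∀ z : ℂ, (p.map (algebraMap ℝ ℂ)).IsRoot z → ‖z‖ < 1) {w : ℕ → ℝ}
    (hw : aeval (seqShift ℝ) ((X - 1) * p) w = 0) :
    ∃ L, Tendsto w atTop (nhds L) ∧ p.eval 1 * L = aeval (seqShift ℝ) p w 0 := by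
  have hdiff : Summable fun t => dist (w t) (w (t + 1)) := by
    have hv : aeval (seqShift ℝ) p (aeval (seqShift ℝ) (X - C 1 : ℝ[X]) w) = 0 := by
      rwa [← Module.End.mul_apply, ← map_mul, mul_comm, map_one]
    simpa [Real.dist_eq, abs_sub_comm, aeval_seqShift_X_sub_C_apply] using
      (summable_of_aeval_seqShift_eq_zero hroots hv).abs
  obtain ⟨L, hL⟩ := cauchySeq_tendsto_of_complete (cauchySeq_of_summable_dist hdiff)
  refine ⟨L, hL, tendsto_nhds_unique (tendsto_aeval_seqShift p hL) ?_⟩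
  have hconst : aeval (seqShift ℝ) p w = fun _ => aeval (seqShift ℝ) p w 0 :=
    funext <| apply_eq_apply_zero_of_aeval_seqShift_X_sub_one <| by
      rwa [← Module.End.mul_apply, ← map_mul]
  rw [hconst]
  exact tendsto_const_nhds

theorem finite_time_value_from_first_iterates_general
    (n : ℕ) (P : Matrix (Fin n) (Fin n) ℝ) (w0 : Fin n → ℝ)
    (M : ℕ) (β : ℕ → ℝ) (j : Fin n)
    (p : Polynomial ℝ)
    (hp : p = ∑ i ∈ Finset.range (M + 1), Polynomial.C (β i) * Polynomial.X ^ i)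
    (q : Polynomial ℝ)
    (hq : q = (Polynomial.X - 1) * p)
    (hann : ∀ l : Fin n, (Polynomial.aeval P q) j l = 0)
    (hroots : ∀ z : ℂ, (p.map (algebraMap ℝ ℂ)).IsRoot z → ‖z‖ < 1) :
    (∑ i ∈ Finset.range (M + 1), β i) ≠ 0 ∧
    Tendsto (fun t : ℕ => ((P ^ t) *ᵥ w0) j) atTop
      (nhds ((∑ i ∈ Finset.range (M + 1), β i * ((P ^ i) *ᵥ w0) j) /
        (∑ i ∈ Finset.range (M + 1), β i))) := by
  set w : ℕ → ℝ := fun t => (P ^ t *ᵥ w0) j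
  have hqw : aeval (seqShift ℝ) q w = 0 := funext fun t => by
    refine (aeval_seqShift_pow_apply (LinearMap.proj j ∘ₗ (mulVecBilin ℝ ℝ).flip w0) P q t).trans ?_
    change ((aeval P q * P ^ t) *ᵥ w0) j = 0
    rw [← mulVec_mulVec]
    simp [mulVec, dotProduct, hann]
  obtain ⟨L, hL, hpL⟩ := exists_tendsto_of_aeval_seqShift_X_sub_one_mul_eq_zero hroots (hq ▸ hqw)
  have heval : p.eval 1 = ∑ i ∈ range (M + 1), β i := by simp [hp, eval_finsetSum]
  have hp1 : p.eval 1 ≠ 0 := fun h => by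
    simpa using hroots 1 (by rw [IsRoot.def, eval_one_map, h, map_zero])
  have hpw : aeval (seqShift ℝ) p w 0 = ∑ i ∈ range (M + 1), β i * w i := by
    simp [hp, LinearMap.sum_apply, seqShift_pow_apply]
  refine ⟨heval ▸ hp1, ?_⟩
  rwa [← heval, ← hpw, ← hpL, mul_div_cancel_left₀ _ hp1]

/-- Finite-time computation of the asymptotic value at a node.
Suppose `q(z) = (z − 1) p(z)` is monic with `e_jᵀ q(P) = 0`, where
`p(z) = ∑_{i=0}^{M} β_i z^i` has all its complex roots strictly inside the unit
circle.  Then `∑ β_i ≠ 0`, the sequence `w_j^t = (P^t w⁰)_j` converges, and its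
limit is `(∑_{i=0}^{M} β_i w_j^i) / (∑_{i=0}^{M} β_i)`. -/
theorem finite_time_value_from_first_iterates
    (n : ℕ) (P : Matrix (Fin n) (Fin n) ℝ) (w0 : Fin n → ℝ)
    (M : ℕ) (β : ℕ → ℝ) (j : Fin n)
    (p : Polynomial ℝ)
    (hp : p = ∑ i ∈ Finset.range (M + 1), Polynomial.C (β i) * Polynomial.X ^ i)
    (q : Polynomial ℝ)
    (hq : q = (Polynomial.X - 1) * p)
    (hmonic : q.Monic)
    (hann : ∀ l : Fin n, (Polynomial.aeval P q) j l = 0)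
    (hroots : ∀ z : ℂ, (p.map (algebraMap ℝ ℂ)).IsRoot z → ‖z‖ < 1) :
    (∑ i ∈ Finset.range (M + 1), β i) ≠ 0 ∧
    Tendsto (fun t : ℕ => ((P ^ t) *ᵥ w0) j) atTop
      (nhds ((∑ i ∈ Finset.range (M + 1), β i * ((P ^ i) *ᵥ w0) j) /
        (∑ i ∈ Finset.range (M + 1), β i))) :=
  finite_time_value_from_first_iterates_general n P w0 M β j p hp q hq hann hroots
end

section
/- Let P be an n×n nonnegative, column stochastic (each column sums to 1), primitive (some power of P has all entries strictly positive) real matrix, with n ≥ 2. Let y^t = P^t y^0 for arbitrary y^0 ∈ ℝ^n and x^t = P^t 𝟙, where 𝟙 is the all-ones vector. Suppose q(z) = (z − 1)·p(z) is a monic real polynomial with e_jᵀ q(P) = 0, where p(z) = Σ_{i=0}^{M} β_i z^i and every complex root of p has modulus strictly less than 1. Then Σ_{i=0}^{M} β_i x_j^i ≠ 0, the ratio y_j^t / x_j^t converges as t → ∞, and lim_{t→∞} y_j^t / x_j^t = (Σ_{i=0}^{M} β_i y_j^i) / (Σ_{i=0}^{M} β_i x_j^i) = (Σ_{i=1}^n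 y_i^0)/n; that is, node j computes the exact network average in finite time from its first M+1 observations of the two iterations. -/
/-!
A column-stochastic `P` preserves the sum of a vector and does not increase its `ℓ¹` norm, and
if every entry of `P ^ k` is at least `δ > 0` then `P ^ k` contracts zero-sum vectors by the
factor `1 - n δ < 1`. Hence `x^t = P^t 𝟙` converges to a positive vector `v`, and
`y^t → (∑ y⁰ / n) v` because `y⁰ - (∑ y⁰ / n) 𝟙` has zero sum.

The condition `e_jᵀ q(P) = 0` says `e_jᵀ p(P) P = e_jᵀ p(P)`, so for every `w` the sum
`∑ β_i (P^(i+t) w)_j = (p(P) P^t w)_j` does not depend on `t`; letting `t → ∞` gives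
`∑ β_i (P^i w)_j = p(1) · lim (P^t w)_j`. The root condition gives `p(1) ≠ 0`, so the ratio of
the two finite sums is the ratio of the limits, `∑ y⁰ / n`.
-/

open Filter Matrix Finset Polynomial Topology

section L1Norm

variable {ι : Type*} [Fintype ι]

def l1Norm (z : ι → ℝ) : ℝ := ∑ i, |z i|

lemma l1Norm_nonneg (z : ι → ℝ) : 0 ≤ l1Norm z :=
  sum_nonneg fun _ _ => abs_nonneg _

lemma norm_le_l1Norm (z : ι → ℝ) : ‖z‖ ≤ l1Norm z :=
  (pi_norm_le_iff_of_nonneg (l1Norm_nonneg z)).2 fun i =>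
    single_le_sum (f := fun i => |z i|) (fun _ _ => abs_nonneg _) (mem_univ i)

lemma l1Norm_sub_le (x y : ι → ℝ) : l1Norm (x - y) ≤ l1Norm x + l1Norm y := by
  simp only [l1Norm, ← sum_add_distrib]
  exact sum_le_sum fun i _ => abs_sub _ _

end L1Norm

namespace Matrix

variable {ι : Type*} [Fintype ι]

lemma exists_pos_le_of_forall_pos {A : Matrix ι ι ℝ} (hA : ∀ i l, 0 < A i l) :
    ∃ δ > 0, ∀ i l, δ ≤ A i l := by
  have hle : ∀ᶠ δ in 𝓝[>] (0 : ℝ), ∀ i l, δ ≤ A i l := by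
    simp only [eventually_all]
    exact fun i l => nhdsWithin_le_nhds ((eventually_lt_nhds (hA i l)).mono fun _ => le_of_lt)
  obtain ⟨δ, hδ, hδ0⟩ := (hle.and self_mem_nhdsWithin).exists
  exact ⟨δ, hδ0, hδ⟩

variable [DecidableEq ι]

lemma l1Norm_mulVec_le {A : Matrix ι ι ℝ} (hA : A ∈ colStochastic ℝ ι) (z : ι → ℝ) :
    l1Norm (A *ᵥ z) ≤ l1Norm z :=
  calc l1Norm (A *ᵥ z) ≤ ∑ i, ∑ l, A i l * |z l| :=
        sum_le_sum fun i _ => (abs_sum_le_sum_abs _ _).trans_eq <| sum_congr rfl fun l _ => by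
          rw [abs_mul, abs_of_nonneg (nonneg_of_mem_colStochastic hA)]
    _ = l1Norm z := by
        rw [sum_comm]
        simp only [← sum_mul, sum_col_of_mem_colStochastic hA, one_mul, l1Norm]

lemma card_mul_le_one_of_mem_colStochastic {A : Matrix ι ι ℝ} (hA : A ∈ colStochastic ℝ ι)
    {δ : ℝ} (hδ : ∀ i l, δ ≤ A i l) : Fintype.card ι * δ ≤ 1 := by
  cases isEmpty_or_nonempty ι with
  | inl _ => simp
  | inr h =>
    obtain ⟨l⟩ := h
    calc Fintype.card ι * δ = ∑ _i : ι, δ := by simp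
      _ ≤ ∑ i, A i l := sum_le_sum fun i _ => hδ i l
      _ = 1 := sum_col_of_mem_colStochastic hA l

/-- Subtracting `δ` from every entry does not change `A *ᵥ z` when `z` has zero sum, and the
remaining entries are nonnegative with column sums `1 - card ι * δ`. -/
lemma l1Norm_mulVec_le_of_sum_eq_zero {A : Matrix ι ι ℝ} (hA : A ∈ colStochastic ℝ ι)
    {δ : ℝ} (hδ : ∀ i l, δ ≤ A i l) {z : ι → ℝ} (hz : ∑ i, z i = 0) :
    l1Norm (A *ᵥ z) ≤ (1 - Fintype.card ι * δ) * l1Norm z := by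
  have hshift : ∀ i, (A *ᵥ z) i = ∑ l, (A i l - δ) * z l := fun i => by
    simp only [mulVec, dotProduct, sub_mul, sum_sub_distrib, ← mul_sum, hz, mul_zero, sub_zero]
  calc l1Norm (A *ᵥ z) ≤ ∑ i, ∑ l, (A i l - δ) * |z l| :=
        sum_le_sum fun i _ => by
          rw [hshift]
          refine (abs_sum_le_sum_abs _ _).trans_eq <| sum_congr rfl fun l _ => ?_
          rw [abs_mul, abs_of_nonneg (sub_nonneg.2 (hδ i l))]
    _ = (1 - Fintype.card ι * δ) * l1Norm z := by
        rw [sum_comm, l1Norm, mul_sum]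
        refine sum_congr rfl fun l _ => ?_
        rw [← sum_mul, sum_sub_distrib, sum_col_of_mem_colStochastic hA l]
        simp

lemma l1Norm_pow_mulVec_le_of_sum_eq_zero {A : Matrix ι ι ℝ} (hA : A ∈ colStochastic ℝ ι)
    {δ : ℝ} (hδ : ∀ i l, δ ≤ A i l) (m : ℕ) {z : ι → ℝ} (hz : ∑ i, z i = 0) :
    l1Norm (A ^ m *ᵥ z) ≤ (1 - Fintype.card ι * δ) ^ m * l1Norm z := by
  induction m generalizing z with
  | zero => simp
  | succ m ih =>
    have hρ : 0 ≤ 1 - Fintype.card ι * δ := by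
      linarith [card_mul_le_one_of_mem_colStochastic hA hδ]
    calc l1Norm (A ^ (m + 1) *ᵥ z) = l1Norm (A ^ m *ᵥ (A *ᵥ z)) := by
          rw [pow_succ, mulVec_mulVec]
      _ ≤ (1 - Fintype.card ι * δ) ^ m * l1Norm (A *ᵥ z) :=
          ih (by rw [sum_mulVec_of_mem_colStochastic hA, hz])
      _ ≤ (1 - Fintype.card ι * δ) ^ m * ((1 - Fintype.card ι * δ) * l1Norm z) :=
          mul_le_mul_of_nonneg_left (l1Norm_mulVec_le_of_sum_eq_zero hA hδ hz) (pow_nonneg hρ m)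
      _ = (1 - Fintype.card ι * δ) ^ (m + 1) * l1Norm z := by ring

lemma le_pow_apply_of_le_pow_apply {P : Matrix ι ι ℝ} (hP : P ∈ colStochastic ℝ ι) {k t : ℕ}
    (hkt : k ≤ t) {δ : ℝ} (hδ : ∀ i l, δ ≤ (P ^ k) i l) (i l : ι) : δ ≤ (P ^ t) i l := by
  have hcol := pow_mem hP (t - k)
  calc δ = ∑ m, δ * (P ^ (t - k)) m l := by
        rw [← mul_sum, sum_col_of_mem_colStochastic hcol, mul_one]
    _ ≤ ∑ m, (P ^ k) i m * (P ^ (t - k)) m l := sum_le_sum fun m _ =>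
        mul_le_mul_of_nonneg_right (hδ i m) (nonneg_of_mem_colStochastic hcol)
    _ = (P ^ t) i l := by rw [← mul_apply, ← pow_add, Nat.add_sub_cancel' hkt]

namespace IsPrimitive

variable {P : Matrix ι ι ℝ}

lemma pos_of_tendsto_pow_mulVec_one (hP : P ∈ colStochastic ℝ ι) (hprim : P.IsPrimitive)
    {v : ι → ℝ} (hv : Tendsto (fun t => P ^ t *ᵥ 1) atTop (𝓝 v)) (i : ι) : 0 < v i := by
  obtain ⟨k, -, hpos⟩ := hprim.exists_pos_pow
  obtain ⟨δ, hδ0, hδ⟩ := exists_pos_le_of_forall_pos hpos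
  have hlow : ∀ t ≥ k, δ ≤ (P ^ t *ᵥ 1) i := fun t hkt =>
    calc δ ≤ (P ^ t) i i := le_pow_apply_of_le_pow_apply hP hkt hδ i i
      _ ≤ ∑ l, (P ^ t) i l :=
          single_le_sum (f := fun l => (P ^ t) i l)
            (fun _ _ => nonneg_of_mem_colStochastic (pow_mem hP t)) (mem_univ i)
      _ = (P ^ t *ᵥ 1) i := by simp [mulVec, dotProduct]
  exact hδ0.trans_le <| ge_of_tendsto (tendsto_pi_nhds.1 hv i) (eventually_atTop.2 ⟨k, hlow⟩)

variable [Nonempty ι]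

/-- One can take `b t = (1 - card ι * δ) ^ (t / k)`, where `δ > 0` bounds the entries of the
positive power `P ^ k` from below. -/
lemma exists_l1Norm_pow_mulVec_le (hP : P ∈ colStochastic ℝ ι) (hprim : P.IsPrimitive) :
    ∃ b : ℕ → ℝ, Tendsto b atTop (𝓝 0) ∧ ∀ t, 0 ≤ b t ∧
      ∀ z : ι → ℝ, ∑ i, z i = 0 → l1Norm (P ^ t *ᵥ z) ≤ b t * l1Norm z := by
  obtain ⟨k, hk, hpos⟩ := hprim.exists_pos_pow
  obtain ⟨δ, hδ0, hδ⟩ := exists_pos_le_of_forall_pos hpos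
  have hPk := pow_mem hP k
  have hρ0 : 0 ≤ 1 - Fintype.card ι * δ := by
    linarith [card_mul_le_one_of_mem_colStochastic hPk hδ]
  have hρ1 : 1 - Fintype.card ι * δ < 1 := by
    have : (0 : ℝ) < Fintype.card ι * δ := mul_pos (by exact_mod_cast Fintype.card_pos) hδ0
    linarith
  refine ⟨fun t => (1 - Fintype.card ι * δ) ^ (t / k),
    (tendsto_pow_atTop_nhds_zero_of_lt_one hρ0 hρ1).comp (Nat.tendsto_div_const_atTop hk.ne'),
    fun t => ⟨pow_nonneg hρ0 _, fun z hz => ?_⟩⟩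
  calc l1Norm (P ^ t *ᵥ z) = l1Norm (P ^ (t % k) *ᵥ ((P ^ k) ^ (t / k) *ᵥ z)) := by
        rw [mulVec_mulVec, ← pow_mul, ← pow_add, Nat.mod_add_div]
    _ ≤ l1Norm ((P ^ k) ^ (t / k) *ᵥ z) := l1Norm_mulVec_le (pow_mem hP _) _
    _ ≤ _ := l1Norm_pow_mulVec_le_of_sum_eq_zero hPk hδ _ hz

lemma tendsto_pow_mulVec_zero (hP : P ∈ colStochastic ℝ ι) (hprim : P.IsPrimitive)
    {z : ι → ℝ} (hz : ∑ i, z i = 0) : Tendsto (fun t => P ^ t *ᵥ z) atTop (𝓝 0) := by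
  obtain ⟨b, hb, hbz⟩ := hprim.exists_l1Norm_pow_mulVec_le hP
  exact squeeze_zero_norm (fun t => (norm_le_l1Norm _).trans ((hbz t).2 z hz))
    (by simpa using hb.mul_const (l1Norm z))

lemma exists_tendsto_pow_mulVec (hP : P ∈ colStochastic ℝ ι) (hprim : P.IsPrimitive)
    (w : ι → ℝ) : ∃ v, Tendsto (fun t => P ^ t *ᵥ w) atTop (𝓝 v) := by
  obtain ⟨b, hb, hbz⟩ := hprim.exists_l1Norm_pow_mulVec_le hP
  refine cauchySeq_tendsto_of_complete <|
    cauchySeq_of_le_tendsto_0' (fun t => b t * (2 * l1Norm w)) (fun t s hts => ?_)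
      (by simpa using hb.mul_const (2 * l1Norm w))
  have hsplit : P ^ t *ᵥ w - P ^ s *ᵥ w = P ^ t *ᵥ (w - P ^ (s - t) *ᵥ w) := by
    rw [mulVec_sub, mulVec_mulVec, ← pow_add, Nat.add_sub_cancel' hts]
  have hzero : ∑ i, (w - P ^ (s - t) *ᵥ w) i = 0 := by
    simp [sum_sub_distrib, sum_mulVec_of_mem_colStochastic (pow_mem hP _)]
  calc dist (P ^ t *ᵥ w) (P ^ s *ᵥ w) ≤ l1Norm (P ^ t *ᵥ (w - P ^ (s - t) *ᵥ w)) := by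
        rw [dist_eq_norm, hsplit]; exact norm_le_l1Norm _
    _ ≤ b t * l1Norm (w - P ^ (s - t) *ᵥ w) := (hbz t).2 _ hzero
    _ ≤ b t * (2 * l1Norm w) := by
        refine mul_le_mul_of_nonneg_left ?_ (hbz t).1
        linarith [l1Norm_sub_le w (P ^ (s - t) *ᵥ w), l1Norm_mulVec_le (pow_mem hP (s - t)) w]

lemma tendsto_pow_mulVec_of_tendsto_pow_mulVec_one (hP : P ∈ colStochastic ℝ ι)
    (hprim : P.IsPrimitive) {v : ι → ℝ} (hv : Tendsto (fun t => P ^ t *ᵥ 1) atTop (𝓝 v))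
    (w : ι → ℝ) :
    Tendsto (fun t => P ^ t *ᵥ w) atTop (𝓝 (((∑ i, w i) / Fintype.card ι) • v)) := by
  set c := (∑ i, w i) / Fintype.card ι
  have hzero : ∑ i, (w - c • 1) i = 0 := by
    have hcard : (Fintype.card ι : ℝ) ≠ 0 := Nat.cast_ne_zero.2 Fintype.card_ne_zero
    simp [c, sum_sub_distrib, mul_div_cancel₀ _ hcard]
  have hsplit : ∀ t, P ^ t *ᵥ (w - c • 1) + c • (P ^ t *ᵥ 1) = P ^ t *ᵥ w := fun t => by
    rw [mulVec_sub, mulVec_smul, sub_add_cancel]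
  simpa [hsplit] using (hprim.tendsto_pow_mulVec_zero hP hzero).add (hv.const_smul c)

end IsPrimitive

lemma aeval_mul_pow_apply {R : Type*} [CommRing R] {P : Matrix ι ι R} {p : R[X]} {j : ι}
    (h : ∀ l, aeval P ((X - 1) * p) j l = 0) (t : ℕ) (l : ι) :
    (aeval P p * P ^ t) j l = aeval P p j l := by
  have hP : ∀ m, (aeval P p * P) j m = aeval P p j m := fun m => by
    have := h m
    rwa [show (X - 1) * p = p * X - p by ring, map_sub, map_mul, aeval_X, sub_apply,
      sub_eq_zero] at this
  induction t generalizing l with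
  | zero => simp
  | succ t ih =>
    rw [pow_succ', ← mul_assoc, mul_apply]
    simp only [hP]
    rw [← mul_apply, ih]

end Matrix

lemma sum_mul_eq_sum_mul_of_tendsto_of_shift_invariant {s : ℕ → ℝ} {c : ℝ}
    (hs : Tendsto s atTop (𝓝 c)) (β : ℕ → ℝ) (S : Finset ℕ)
    (hshift : ∀ t, ∑ i ∈ S, β i * s (i + t) = ∑ i ∈ S, β i * s i) :
    ∑ i ∈ S, β i * s i = (∑ i ∈ S, β i) * c := by
  have hlim : Tendsto (fun t => ∑ i ∈ S, β i * s (i + t)) atTop (𝓝 ((∑ i ∈ S, β i) * c)) := by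
    rw [sum_mul]
    refine tendsto_finsetSum _ fun i _ => ?_
    simpa only [add_comm _ i] using ((tendsto_add_atTop_iff_nat i).2 hs).const_mul (β i)
  simp only [hshift] at hlim
  exact tendsto_nhds_unique tendsto_const_nhds hlim

lemma sum_mul_pow_mulVec_apply_eq_eval_one_mul {ι : Type*} [Fintype ι] [DecidableEq ι]
    {P : Matrix ι ι ℝ} {β : ℕ → ℝ} {S : Finset ℕ} {p : ℝ[X]}
    (hp : p = ∑ i ∈ S, C (β i) * X ^ i) {j : ι} (h : ∀ l, aeval P ((X - 1) * p) j l = 0)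
    {w : ι → ℝ} {c : ℝ} (hw : Tendsto (fun t => (P ^ t *ᵥ w) j) atTop (𝓝 c)) :
    ∑ i ∈ S, β i * (P ^ i *ᵥ w) j = p.eval 1 * c := by
  have haeval : ∀ v, (aeval P p *ᵥ v) j = ∑ i ∈ S, β i * (P ^ i *ᵥ v) j := fun v => by
    simp [hp, sum_mulVec, ← Algebra.smul_def, smul_mulVec]
  have heval : p.eval 1 = ∑ i ∈ S, β i := by simp [hp, eval_finsetSum]
  rw [heval]
  refine sum_mul_eq_sum_mul_of_tendsto_of_shift_invariant hw β S fun t => ?_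
  simp only [pow_add, ← mulVec_mulVec, ← haeval]
  rw [mulVec_mulVec]
  simp only [mulVec, dotProduct, aeval_mul_pow_apply h]

lemma Polynomial.eval_one_ne_zero_of_forall_root_norm_lt_one {p : ℝ[X]}
    (h : ∀ z : ℂ, (p.map (algebraMap ℝ ℂ)).IsRoot z → ‖z‖ < 1) : p.eval 1 ≠ 0 := by
  intro h1
  simpa using h 1 (by simpa using (show p.IsRoot 1 from h1).map (f := algebraMap ℝ ℂ))

theorem finite_time_exact_ratio_consensus_general
    (n : ℕ) (P : Matrix (Fin n) (Fin n) ℝ)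
    (hnonneg : ∀ i j, 0 ≤ P i j)
    (hcol : ∀ j : Fin n, ∑ i : Fin n, P i j = 1)
    (hprim : ∃ k : ℕ, 1 ≤ k ∧ ∀ i j, 0 < (P ^ k) i j)
    (y0 : Fin n → ℝ) (M : ℕ) (β : ℕ → ℝ) (j : Fin n)
    (p : Polynomial ℝ)
    (hp : p = ∑ i ∈ Finset.range (M + 1), Polynomial.C (β i) * Polynomial.X ^ i)
    (q : Polynomial ℝ)
    (hq : q = (Polynomial.X - 1) * p)
    (hann : ∀ l : Fin n, (Polynomial.aeval P q) j l = 0)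
    (hroots : ∀ z : ℂ, (p.map (algebraMap ℝ ℂ)).IsRoot z → ‖z‖ < 1) :
    (∑ i ∈ Finset.range (M + 1), β i * ((P ^ i) *ᵥ (fun _ => (1 : ℝ))) j) ≠ 0 ∧
    Tendsto
      (fun t : ℕ => ((P ^ t) *ᵥ y0) j / ((P ^ t) *ᵥ (fun _ => (1 : ℝ))) j)
      atTop
      (nhds ((∑ i ∈ Finset.range (M + 1), β i * ((P ^ i) *ᵥ y0) j) /
        (∑ i ∈ Finset.range (M + 1), β i * ((P ^ i) *ᵥ (fun _ => (1 : ℝ))) j))) ∧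
    (∑ i ∈ Finset.range (M + 1), β i * ((P ^ i) *ᵥ y0) j) /
        (∑ i ∈ Finset.range (M + 1), β i * ((P ^ i) *ᵥ (fun _ => (1 : ℝ))) j)
      = (∑ i : Fin n, y0 i) / n := by
  have : Nonempty (Fin n) := ⟨j⟩
  have hP : P ∈ colStochastic ℝ (Fin n) := mem_colStochastic_iff_sum.2 ⟨hnonneg, hcol⟩
  have hPprim : P.IsPrimitive := ⟨hnonneg, hprim⟩
  obtain ⟨v, hv⟩ := hPprim.exists_tendsto_pow_mulVec hP fun _ => 1
  have hvj : 0 < v j := hPprim.pos_of_tendsto_pow_mulVec_one hP hv j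
  have hx := tendsto_pi_nhds.1 hv j
  have hy := tendsto_pi_nhds.1 (hPprim.tendsto_pow_mulVec_of_tendsto_pow_mulVec_one hP hv y0) j
  have hp1 := eval_one_ne_zero_of_forall_root_norm_lt_one hroots
  subst hq
  rw [sum_mul_pow_mulVec_apply_eq_eval_one_mul hp hann hx,
    sum_mul_pow_mulVec_apply_eq_eval_one_mul hp hann hy, mul_div_mul_left _ _ hp1]
  refine ⟨mul_ne_zero hp1 hvj.ne', hy.div hx hvj.ne', ?_⟩
  simp only [Fintype.card_fin, Pi.smul_apply, smul_eq_mul]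
  field_simp

/-- Finite-time exact ratio consensus, Theorem 1 of the paper.
For a nonnegative, column-stochastic, primitive matrix `P` (`n ≥ 2`), with
`y^t = P^t y⁰` and `x^t = P^t 𝟙`, if `q(z) = (z − 1) p(z)` is monic with
`e_jᵀ q(P) = 0`, where `p(z) = ∑_{i=0}^{M} β_i z^i` has all complex roots of
modulus `< 1`, then `∑ β_i x_j^i ≠ 0`, the ratio `y_j^t / x_j^t` converges,
and the limit equals `(∑ β_i y_j^i)/(∑ β_i x_j^i)`, which in turn equals the
exact network average `(∑ i, y⁰ i)/n`. -/
theorem finite_time_exact_ratio_consensus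
    (n : ℕ) (hn : 2 ≤ n) (P : Matrix (Fin n) (Fin n) ℝ)
    (hnonneg : ∀ i j, 0 ≤ P i j)
    (hcol : ∀ j : Fin n, ∑ i : Fin n, P i j = 1)
    (hprim : ∃ k : ℕ, 1 ≤ k ∧ ∀ i j, 0 < (P ^ k) i j)
    (y0 : Fin n → ℝ) (M : ℕ) (β : ℕ → ℝ) (j : Fin n)
    (p : Polynomial ℝ)
    (hp : p = ∑ i ∈ Finset.range (M + 1), Polynomial.C (β i) * Polynomial.X ^ i)
    (q : Polynomial ℝ)
    (hq : q = (Polynomial.X - 1) * p)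
    (hmonic : q.Monic)
    (hann : ∀ l : Fin n, (Polynomial.aeval P q) j l = 0)
    (hroots : ∀ z : ℂ, (p.map (algebraMap ℝ ℂ)).IsRoot z → ‖z‖ < 1) :
    (∑ i ∈ Finset.range (M + 1), β i * ((P ^ i) *ᵥ (fun _ => (1 : ℝ))) j) ≠ 0 ∧
    Tendsto
      (fun t : ℕ => ((P ^ t) *ᵥ y0) j / ((P ^ t) *ᵥ (fun _ => (1 : ℝ))) j)
      atTop
      (nhds ((∑ i ∈ Finset.range (M + 1), β i * ((P ^ i) *ᵥ y0) j) /
        (∑ i ∈ Finset.range (M + 1), β i * ((P ^ i) *ᵥ (fun _ => (1 : ℝ))) j))) ∧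
    (∑ i ∈ Finset.range (M + 1), β i * ((P ^ i) *ᵥ y0) j) /
        (∑ i ∈ Finset.range (M + 1), β i * ((P ^ i) *ᵥ (fun _ => (1 : ℝ))) j)
      = (∑ i : Fin n, y0 i) / n :=
  finite_time_exact_ratio_consensus_general n P hnonneg hcol hprim y0 M β j p hp q hq hann hroots
end

section
/- Let E be a finite-dimensional real inner product space, F, g : E → ℝ convex functions, and ρ > 0. Suppose X^{k+1}, z^k, z^{k+1}, λ^k, λ^{k+1} ∈ E satisfy one ADMM step: X^{k+1} is a global minimizer over E of x ↦ F(x) + g(z^k) + ⟨λ^k, x − z^k⟩ + (ρ/2)‖x − z^k‖²; z^{k+1} is a global minimizer over E of z ↦ F(X^{k+1}) + g(z) + ⟨λ^k, X^{k+1} − z⟩ + (ρ/2)‖X^{k+1} − z‖²; and λ^{k+1} = λ^k + ρ(X^{k+1} − z^{k+1}). Then for all X, z ∈ E: F(X^{k+1}) − F(X) + g(z^{k+1}) − g(z) ≤ ⟨λ^{k+1}, (X − X^{k+1}) − (z − z^{k+1})⟩ + ρ⟨X − X^{k+1}, z^{k+1} − z^k⟩. -/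
open RealInnerProductSpace Set Filter Topology

/-! If `x₀` minimizes `f + h` with `f` convex and `h` smooth, comparing with the points of the
segment towards `X` and letting them tend to `x₀` gives `f x₀ - f X ≤ Dh(x₀)(X - x₀)`. Each ADMM
subproblem has this form, with `h` the linear-plus-quadratic part of the augmented Lagrangian;
the resulting gradients are `λ^{k+1} + ρ (z^{k+1} - z^k)` for the `x`-step and `-λ^{k+1}` for the
`z`-step, and adding the two inequalities gives the claim. -/

theorem ConvexOn.sub_le_of_isMinOn_add {E : Type*} [AddCommGroup E] [Module ℝ E]
    {f h : E → ℝ} (hf : ConvexOn ℝ univ f) {x₀ X : E} {h' : ℝ}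
    (hmin : IsMinOn (f + h) univ x₀) (hh : HasLineDerivAt ℝ h h' x₀ (X - x₀)) :
    f x₀ - f X ≤ h' := by
  have hslope : ∀ t ∈ Ioc (0 : ℝ) 1, f x₀ - f X ≤ t⁻¹ • (h (x₀ + t • (X - x₀)) - h x₀) := by
    rintro t ⟨ht₀, ht₁⟩
    have hseg : x₀ + t • (X - x₀) = (1 - t) • x₀ + t • X := by module
    have hconv : f (x₀ + t • (X - x₀)) ≤ (1 - t) * f x₀ + t * f X := by
      rw [hseg]
      exact hf.2 (mem_univ _) (mem_univ _) (by linarith) ht₀.le (by ring)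
    have hle : f x₀ + h x₀ ≤ f (x₀ + t • (X - x₀)) + h (x₀ + t • (X - x₀)) :=
      hmin (mem_univ _)
    rw [smul_eq_mul, le_inv_mul_iff₀ ht₀]
    linarith
  exact ge_of_tendsto hh.tendsto_slope_zero_right
    (eventually_of_mem (Ioc_mem_nhdsGT zero_lt_one) hslope)

theorem hasFDerivAt_inner_sub_add_mul_norm_sub_sq {E : Type*} [NormedAddCommGroup E]
    [InnerProductSpace ℝ E] (w y x : E) (ρ : ℝ) :
    HasFDerivAt (fun x => ⟪w, x - y⟫ + ρ / 2 * ‖x - y‖ ^ 2)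
      (innerSL ℝ (w + ρ • (x - y))) x := by
  have hsub : HasFDerivAt (fun x : E => x - y) (ContinuousLinearMap.id ℝ E) x :=
    (hasFDerivAt_id x).sub_const y
  refine (((innerSL ℝ w).hasFDerivAt.comp x hsub).add
    (hsub.norm_sq.const_mul (ρ / 2))).congr_fderiv ?_
  ext v
  simp only [ContinuousLinearMap.comp_id, add_apply, coe_innerSL_apply,
    smul_apply, map_add, map_smul, smul_eq_mul, nsmul_eq_mul]
  ring

theorem ConvexOn.sub_le_inner_of_isMinOn_augmented {E : Type*} [NormedAddCommGroup E]
    [InnerProductSpace ℝ E] {f : E → ℝ} (hf : ConvexOn ℝ univ f) {ρ : ℝ} {w y x₀ : E}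
    (hmin : ∀ x, f x₀ + ⟪w, x₀ - y⟫ + ρ / 2 * ‖x₀ - y‖ ^ 2 ≤
      f x + ⟪w, x - y⟫ + ρ / 2 * ‖x - y‖ ^ 2) (X : E) :
    f x₀ - f X ≤ ⟪w + ρ • (x₀ - y), X - x₀⟫ :=
  hf.sub_le_of_isMinOn_add (h := fun x => ⟪w, x - y⟫ + ρ / 2 * ‖x - y‖ ^ 2)
    (isMinOn_univ_iff.2 fun x => by simpa only [Pi.add_apply, add_assoc] using hmin x)
    ((hasFDerivAt_inner_sub_add_mul_norm_sub_sq w y x₀ ρ).hasLineDerivAt (X - x₀))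

theorem admm_one_step_inequality_general
    {E : Type*} [NormedAddCommGroup E] [InnerProductSpace ℝ E]
    (F g : E → ℝ) (hF : ConvexOn ℝ Set.univ F) (hg : ConvexOn ℝ Set.univ g)
    (ρ : ℝ)
    (X1 zk z1 lamk lam1 : E)
    (hX : ∀ x : E,
      F X1 + g zk + ⟪lamk, X1 - zk⟫ + ρ / 2 * ‖X1 - zk‖ ^ 2 ≤
      F x + g zk + ⟪lamk, x - zk⟫ + ρ / 2 * ‖x - zk‖ ^ 2)
    (hz : ∀ z : E,
      F X1 + g z1 + ⟪lamk, X1 - z1⟫ + ρ / 2 * ‖X1 - z1‖ ^ 2 ≤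
      F X1 + g z + ⟪lamk, X1 - z⟫ + ρ / 2 * ‖X1 - z‖ ^ 2)
    (hlam : lam1 = lamk + ρ • (X1 - z1)) :
    ∀ X z : E,
      F X1 - F X + g z1 - g z ≤
        ⟪lam1, (X - X1) - (z - z1)⟫ + ρ * ⟪X - X1, z1 - zk⟫ := by
  intro X z
  have hFX : F X1 - F X ≤ ⟪lam1 + ρ • (z1 - zk), X - X1⟫ := by
    have hmin : ∀ x, F X1 + ⟪lamk, X1 - zk⟫ + ρ / 2 * ‖X1 - zk‖ ^ 2 ≤
        F x + ⟪lamk, x - zk⟫ + ρ / 2 * ‖x - zk‖ ^ 2 := fun x => by linarith [hX x]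
    have h := hF.sub_le_inner_of_isMinOn_augmented hmin X
    rwa [show lamk + ρ • (X1 - zk) = lam1 + ρ • (z1 - zk) by rw [hlam]; module] at h
  have hgz : g z1 - g z ≤ ⟪-lam1, z - z1⟫ := by
    have hmin : ∀ z', g z1 + ⟪-lamk, z1 - X1⟫ + ρ / 2 * ‖z1 - X1‖ ^ 2 ≤
        g z' + ⟪-lamk, z' - X1⟫ + ρ / 2 * ‖z' - X1‖ ^ 2 := fun z' => by
      simp only [inner_neg_left, ← inner_neg_right, neg_sub, norm_sub_rev _ X1]
      linarith [hz z']
    have h := hg.sub_le_inner_of_isMinOn_augmented hmin z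
    rwa [show -lamk + ρ • (z1 - X1) = -lam1 by rw [hlam]; module] at h
  calc F X1 - F X + g z1 - g z
      ≤ ⟪lam1 + ρ • (z1 - zk), X - X1⟫ + ⟪-lam1, z - z1⟫ := by linarith
    _ = ⟪lam1, (X - X1) - (z - z1)⟫ + ρ * ⟪X - X1, z1 - zk⟫ := by
      simp only [inner_add_left, inner_neg_left, inner_sub_right, real_inner_smul_left,
        real_inner_comm (z1 - zk)]
      ring

/-- One-step ADMM inequality, Eq. (31) in the paper.
Let `E` be a finite-dimensional real inner product space, `F, g : E → ℝ`
convex, `ρ > 0`.  If `(X1, z1, lam1)` results from one ADMM step at `(zk, lamk)`,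
then for all `X, z ∈ E`:
`F X1 − F X + g z1 − g z ≤ ⟪lam1, (X − X1) − (z − z1)⟫ + ρ ⟪X − X1, z1 − zk⟫`. -/
theorem admm_one_step_inequality
    {E : Type*} [NormedAddCommGroup E] [InnerProductSpace ℝ E]
    [FiniteDimensional ℝ E]
    (F g : E → ℝ) (hF : ConvexOn ℝ Set.univ F) (hg : ConvexOn ℝ Set.univ g)
    (ρ : ℝ) (hρ : 0 < ρ)
    (X1 zk z1 lamk lam1 : E)
    (hX : ∀ x : E,
      F X1 + g zk + ⟪lamk, X1 - zk⟫ + ρ / 2 * ‖X1 - zk‖ ^ 2 ≤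
      F x + g zk + ⟪lamk, x - zk⟫ + ρ / 2 * ‖x - zk‖ ^ 2)
    (hz : ∀ z : E,
      F X1 + g z1 + ⟪lamk, X1 - z1⟫ + ρ / 2 * ‖X1 - z1‖ ^ 2 ≤
      F X1 + g z + ⟪lamk, X1 - z⟫ + ρ / 2 * ‖X1 - z‖ ^ 2)
    (hlam : lam1 = lamk + ρ • (X1 - z1)) :
    ∀ X z : E,
      F X1 - F X + g z1 - g z ≤
        ⟪lam1, (X - X1) - (z - z1)⟫ + ρ * ⟪X - X1, z1 - zk⟫ :=
  admm_one_step_inequality_general F g hF hg ρ X1 zk z1 lamk lam1 hX hz hlam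
end

section
/- Let E be a finite-dimensional real inner product space, F, g : E → ℝ convex functions, and ρ > 0. Suppose X^{k+1}, z^k, z^{k+1}, λ^k, λ^{k+1} ∈ E satisfy one ADMM step (X^{k+1} globally minimizes x ↦ L_ρ(x, z^k, λ^k); z^{k+1} globally minimizes z ↦ L_ρ(X^{k+1}, z, λ^k); λ^{k+1} = λ^k + ρ(X^{k+1} − z^{k+1})). Then for every X* ∈ E, every z* ∈ E with X* = z*, and every λ* ∈ E: F(X^{k+1}) − F(X*) + g(z^{k+1}) − g(z*) + ⟨λ*, X^{k+1} − z^{k+1}⟩ ≤ (1/(2ρ))(‖λ* − λ^k‖² − ‖λ* − λ^{k+1}‖²) + (ρ/2)(‖X* − z^k‖² − ‖X* − z^{k+1}‖²). -/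
/-!
Each primal update is a proximal step of a convex function, and its optimality yields a
subgradient inequality: if `x₀` minimizes `f + ⟪a, ·⟫ + ρ/2 ‖· - c‖²`, then
`f x₀ - f y ≤ ⟪a + ρ (x₀ - c), y - x₀⟫` (compare `x₀` with `x₀ + t (y - x₀)` and let `t → 0⁺`).
For `g` at `z^{k+1}` the subgradient is `-λ^{k+1}`. Adding the two inequalities and expanding the
squares, their sum plus `⟪λ*, X^{k+1} - z^{k+1}⟫` is the telescoping bound minus
`ρ/2 ‖X^{k+1} - z^k‖² ≥ 0`.
-/

open RealInnerProductSpace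

open Filter Topology in
theorem le_of_forall_le_add_mul {a b c : ℝ} (h : ∀ t : ℝ, 0 < t → t ≤ 1 → a ≤ b + t * c) :
    a ≤ b := by
  have hlim : Tendsto (fun t : ℝ => b + t * c) (𝓝[>] 0) (𝓝 b) := by
    simpa using ((continuous_id.mul continuous_const).const_add b).continuousWithinAt
      (s := Set.Ioi 0) (x := (0 : ℝ)) |>.tendsto
  refine ge_of_tendsto hlim ?_
  filter_upwards [Ioo_mem_nhdsGT (zero_lt_one' ℝ)] with t ht using h t ht.1 ht.2.le

theorem ConvexOn.mul_sub_le_of_isMinOn_add {E : Type*} [AddCommGroup E] [Module ℝ E]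
    {s : Set E} {f h : E → ℝ} (hf : ConvexOn ℝ s f) {x₀ y : E} (hx₀ : x₀ ∈ s) (hy : y ∈ s)
    (hmin : IsMinOn (f + h) s x₀) {t : ℝ} (ht₀ : 0 ≤ t) (ht₁ : t ≤ 1) :
    t * (f x₀ - f y) ≤ h (x₀ + t • (y - x₀)) - h x₀ := by
  have hseg : (1 - t) • x₀ + t • y = x₀ + t • (y - x₀) := by module
  have hmem := hf.1 hx₀ hy (sub_nonneg.2 ht₁) ht₀ (sub_add_cancel 1 t)
  have hconv := hf.2 hx₀ hy (sub_nonneg.2 ht₁) ht₀ (sub_add_cancel 1 t)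
  rw [hseg] at hmem hconv
  rw [smul_eq_mul, smul_eq_mul] at hconv
  have hle := isMinOn_iff.1 hmin _ hmem
  simp only [Pi.add_apply] at hle
  linarith

theorem inner_add_half_mul_norm_sq_add_smul {E : Type*} [NormedAddCommGroup E]
    [InnerProductSpace ℝ E] (ρ t : ℝ) (a c x d : E) :
    (⟪a, x + t • d⟫ + ρ / 2 * ‖x + t • d - c‖ ^ 2) - (⟪a, x⟫ + ρ / 2 * ‖x - c‖ ^ 2) =
      t * ⟪a + ρ • (x - c), d⟫ + t * (t * (ρ / 2 * ‖d‖ ^ 2)) := by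
  rw [add_sub_right_comm x, norm_add_sq_real, inner_add_right, inner_add_left,
    real_inner_smul_right, real_inner_smul_right, real_inner_smul_left, norm_smul,
    Real.norm_eq_abs, mul_pow, sq_abs]
  ring

theorem ConvexOn.sub_le_inner_of_isMinOn_add_inner_add_norm_sq {E : Type*}
    [NormedAddCommGroup E] [InnerProductSpace ℝ E] {f : E → ℝ} (hf : ConvexOn ℝ Set.univ f)
    {ρ : ℝ} {a c x₀ : E} (hmin : IsMinOn (fun x => f x + (⟪a, x⟫ + ρ / 2 * ‖x - c‖ ^ 2))
      Set.univ x₀) (y : E) :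
    f x₀ - f y ≤ ⟪a + ρ • (x₀ - c), y - x₀⟫ := by
  refine le_of_forall_le_add_mul (c := ρ / 2 * ‖y - x₀‖ ^ 2) fun t ht₀ ht₁ => ?_
  have h := hf.mul_sub_le_of_isMinOn_add (Set.mem_univ x₀) (Set.mem_univ y) hmin ht₀.le ht₁
  rw [inner_add_half_mul_norm_sq_add_smul, ← mul_add] at h
  exact le_of_mul_le_mul_left h ht₀

theorem admm_step_identity {E : Type*} [NormedAddCommGroup E] [InnerProductSpace ℝ E]
    {ρ : ℝ} (hρ : ρ ≠ 0) (x zk z lam lams xs : E) :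
    1 / (2 * ρ) * (‖lams - lam‖ ^ 2 - ‖lams - (lam + ρ • (x - z))‖ ^ 2) +
        ρ / 2 * (‖xs - zk‖ ^ 2 - ‖xs - z‖ ^ 2) =
      ⟪lam + ρ • (x - zk), xs - x⟫ - ⟪lam + ρ • (x - z), xs - z⟫ + ⟪lams, x - z⟫ +
        ρ / 2 * ‖x - zk‖ ^ 2 := by
  simp only [norm_sub_sq_real, norm_add_sq_real, inner_add_left, inner_add_right,
    inner_sub_right, real_inner_smul_right, real_inner_self_eq_norm_sq, norm_smul,
    Real.norm_eq_abs, mul_pow, sq_abs, real_inner_comm]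
  field_simp
  ring

theorem admm_per_step_telescoping_bound_general
    {E : Type*} [NormedAddCommGroup E] [InnerProductSpace ℝ E]
    (F g : E → ℝ) (hF : ConvexOn ℝ Set.univ F) (hg : ConvexOn ℝ Set.univ g)
    (ρ : ℝ) (hρ : 0 < ρ)
    (X1 zk z1 lamk lam1 : E)
    (hX : ∀ x : E,
      F X1 + g zk + ⟪lamk, X1 - zk⟫ + ρ / 2 * ‖X1 - zk‖ ^ 2 ≤
      F x + g zk + ⟪lamk, x - zk⟫ + ρ / 2 * ‖x - zk‖ ^ 2)
    (hz : ∀ z : E,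
      F X1 + g z1 + ⟪lamk, X1 - z1⟫ + ρ / 2 * ‖X1 - z1‖ ^ 2 ≤
      F X1 + g z + ⟪lamk, X1 - z⟫ + ρ / 2 * ‖X1 - z‖ ^ 2)
    (hlam : lam1 = lamk + ρ • (X1 - z1)) :
    ∀ Xs zs lams : E, Xs = zs →
      F X1 - F Xs + g z1 - g zs + ⟪lams, X1 - z1⟫ ≤
        1 / (2 * ρ) * (‖lams - lamk‖ ^ 2 - ‖lams - lam1‖ ^ 2) +
        ρ / 2 * (‖Xs - zk‖ ^ 2 - ‖Xs - z1‖ ^ 2) := by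
  rintro Xs _ lams rfl
  have hF_opt : F X1 - F Xs ≤ ⟪lamk + ρ • (X1 - zk), Xs - X1⟫ := by
    refine hF.sub_le_inner_of_isMinOn_add_inner_add_norm_sq (fun x _ => ?_) Xs
    have h := hX x
    simp only [Set.mem_ofPred_eq, inner_sub_right] at h ⊢
    linarith
  have hg_opt : g z1 - g Xs ≤ ⟪-lamk + ρ • (z1 - X1), Xs - z1⟫ := by
    refine hg.sub_le_inner_of_isMinOn_add_inner_add_norm_sq (fun z _ => ?_) Xs
    have h := hz z
    simp only [Set.mem_ofPred_eq, inner_sub_right, inner_neg_left] at h ⊢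
    rw [norm_sub_rev z1, norm_sub_rev z]
    linarith
  have hdual : -lamk + ρ • (z1 - X1) = -lam1 := by rw [hlam]; module
  rw [hdual, inner_neg_left] at hg_opt
  rw [hlam, admm_step_identity hρ.ne', ← hlam]
  have hres : 0 ≤ ρ / 2 * ‖X1 - zk‖ ^ 2 := by positivity
  linarith

/-- Per-step telescoping bound for ADMM, Eq. (34) in the paper.
Under one ADMM step at `(zk, lamk)` producing `(X1, z1, lam1)`, for every
feasible optimal pair `Xs = zs` and every `lams`:
`F X1 − F Xs + g z1 − g zs + ⟪lams, X1 − z1⟫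
  ≤ (1/(2ρ))(‖lams − lamk‖² − ‖lams − lam1‖²)
    + (ρ/2)(‖Xs − zk‖² − ‖Xs − z1‖²)`. -/
theorem admm_per_step_telescoping_bound
    {E : Type*} [NormedAddCommGroup E] [InnerProductSpace ℝ E]
    [FiniteDimensional ℝ E]
    (F g : E → ℝ) (hF : ConvexOn ℝ Set.univ F) (hg : ConvexOn ℝ Set.univ g)
    (ρ : ℝ) (hρ : 0 < ρ)
    (X1 zk z1 lamk lam1 : E)
    (hX : ∀ x : E,
      F X1 + g zk + ⟪lamk, X1 - zk⟫ + ρ / 2 * ‖X1 - zk‖ ^ 2 ≤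
      F x + g zk + ⟪lamk, x - zk⟫ + ρ / 2 * ‖x - zk‖ ^ 2)
    (hz : ∀ z : E,
      F X1 + g z1 + ⟪lamk, X1 - z1⟫ + ρ / 2 * ‖X1 - z1‖ ^ 2 ≤
      F X1 + g z + ⟪lamk, X1 - z⟫ + ρ / 2 * ‖X1 - z‖ ^ 2)
    (hlam : lam1 = lamk + ρ • (X1 - z1)) :
    ∀ Xs zs lams : E, Xs = zs →
      F X1 - F Xs + g z1 - g zs + ⟪lams, X1 - z1⟫ ≤
        1 / (2 * ρ) * (‖lams - lamk‖ ^ 2 - ‖lams - lam1‖ ^ 2) +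
        ρ / 2 * (‖Xs - zk‖ ^ 2 - ‖Xs - z1‖ ^ 2) :=
  admm_per_step_telescoping_bound_general F g hF hg ρ hρ X1 zk z1 lamk lam1 hX hz hlam
end

section
/- Let E be a finite-dimensional real inner product space, F, g : E → ℝ convex functions, and ρ > 0. Let (X^k)_{k≥0}, (z^k)_{k≥0}, (λ^k)_{k≥0} in E be sequences such that for every k: X^{k+1} is a global minimizer over E of x ↦ F(x) + g(z^k) + ⟨λ^k, x − z^k⟩ + (ρ/2)‖x − z^k‖²; z^{k+1} is a global minimizer over E of z ↦ F(X^{k+1}) + g(z) + ⟨λ^k, X^{k+1} − z⟩ + (ρ/2)‖X^{k+1} − z‖²; and λ^{k+1} = λ^k + ρ(X^{k+1} − z^{k+1}). Suppose (X*, z*, λ*) is a saddle point of the Lagrangian L(x, z, λ) = F(x) + g(z) + ⟨λ, x − z⟩, i.e., L(X*, z*, λ) ≤ L(X*, z*, λ*) ≤ L(X, z, λ*) for all X, z, λ ∈ E, and X* = z*. Then for every k ≥ 1, with the ergodic averages X̄^k = (1/k) Σ_{s=0}^{k−1} X^{s+1} and z̄^k = (1/k) Σ_{s=0}^{k−1}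 z^{s+1}, one has 0 ≤ L(X̄^k, z̄^k, λ*) − L(X*, z*, λ*) ≤ (1/k) ( (1/(2ρ))‖λ* − λ^0‖² + (ρ/2)‖X* − z^0‖² ); in particular the Lagrangian optimality gap of the ergodic ADMM iterates decays at rate O(1/k). -/
/-!
The optimality conditions of the two ADMM subproblems say that `-(λᵏ + ρ(Xᵏ⁺¹ - zᵏ))` is a
subgradient of `F` at `Xᵏ⁺¹` and `λᵏ⁺¹` one of `g` at `zᵏ⁺¹`. Testing them against the saddle point
and expanding squares bounds the Lagrangian gap of `(Xᵏ⁺¹, zᵏ⁺¹)` by the decrease of the Lyapunov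
function `(1/2ρ)‖λ* - λᵏ‖² + (ρ/2)‖X* - zᵏ‖²`. Summing telescopes, and Jensen's inequality for the
Lagrangian, convex in `(x, z)`, passes to the ergodic averages.
-/

open RealInnerProductSpace Finset Filter Topology

lemma Finset.sum_range_le_of_le_sub_succ {α : Type*} [AddCommGroup α] [PartialOrder α]
    [IsOrderedAddMonoid α] {u D : ℕ → α} (h : ∀ s, u s ≤ D s - D (s + 1)) {k : ℕ}
    (hk : 0 ≤ D k) : ∑ s ∈ range k, u s ≤ D 0 :=
  calc ∑ s ∈ range k, u s ≤ ∑ s ∈ range k, (D s - D (s + 1)) := sum_le_sum fun s _ => h s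
    _ = D 0 - D k := sum_range_sub' D k
    _ ≤ D 0 := sub_le_self _ hk

lemma ConvexOn.map_inv_card_smul_sum_le {V ι : Type*} [AddCommGroup V] [Module ℝ V] {f : V → ℝ}
    (hf : ConvexOn ℝ Set.univ f) {t : Finset ι} (ht : t.Nonempty) (p : ι → V) :
    f ((#t : ℝ)⁻¹ • ∑ i ∈ t, p i) ≤ (#t : ℝ)⁻¹ * ∑ i ∈ t, f (p i) := by
  rw [smul_sum, mul_sum]
  exact hf.map_sum_le (fun _ _ => by positivity) (by simp [ht.card_ne_zero])
    fun _ _ => Set.mem_univ _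

lemma nonneg_of_forall_mem_Ioc_nonneg_add_mul {C D : ℝ}
    (h : ∀ t ∈ Set.Ioc (0 : ℝ) 1, 0 ≤ C + t * D) : 0 ≤ C := by
  have hlim : Tendsto (fun t : ℝ => C + t * D) (𝓝[>] 0) (𝓝 C) := by
    have : Continuous fun t : ℝ => C + t * D := by fun_prop
    simpa using (this.tendsto 0).mono_left nhdsWithin_le_nhds
  exact ge_of_tendsto hlim <| eventually_of_mem (Ioc_mem_nhdsGT one_pos) h

section ADMM

variable {E : Type*} [NormedAddCommGroup E] {ρ : ℝ}

noncomputable def admmLyapunov (ρ : ℝ) (ls xs l z : E) : ℝ :=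
  1 / (2 * ρ) * ‖ls - l‖ ^ 2 + ρ / 2 * ‖xs - z‖ ^ 2

lemma admmLyapunov_nonneg (hρ : 0 < ρ) (ls xs l z : E) : 0 ≤ admmLyapunov ρ ls xs l z := by
  unfold admmLyapunov
  positivity

variable [InnerProductSpace ℝ E]

lemma convexOn_inner_sub (l c : E) : ConvexOn ℝ Set.univ fun x => ⟪l, x - c⟫ := by
  refine ⟨convex_univ, fun x _ y _ a b _ _ hab => le_of_eq ?_⟩
  have : a • x + b • y - c = a • (x - c) + b • (y - c) := by
    linear_combination (norm := module) hab • c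
  dsimp only
  rw [this, inner_add_right, inner_smul_right, inner_smul_right, smul_eq_mul, smul_eq_mul]

lemma ConvexOn.prox_subgradient {ψ : E → ℝ} (hψ : ConvexOn ℝ Set.univ ψ) {a xh : E}
    (hmin : ∀ x, ψ xh + ρ / 2 * ‖xh - a‖ ^ 2 ≤ ψ x + ρ / 2 * ‖x - a‖ ^ 2) (x : E) :
    ψ xh + ρ * ⟪a - xh, x - xh⟫ ≤ ψ x := by
  suffices 0 ≤ ψ x - ψ xh - ρ * ⟪a - xh, x - xh⟫ by linarith
  -- compare `xh` with the points `xh + t • (x - xh)` and let `t → 0⁺`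
  refine nonneg_of_forall_mem_Ioc_nonneg_add_mul (D := ρ / 2 * ‖x - xh‖ ^ 2)
    fun t ⟨ht0, ht1⟩ => ?_
  have hconv : ψ (xh + t • (x - xh)) ≤ (1 - t) * ψ xh + t * ψ x := by
    have := hψ.2 (Set.mem_univ xh) (Set.mem_univ x) (sub_nonneg.2 ht1) ht0.le (by ring)
    rwa [show (1 - t) • xh + t • x = xh + t • (x - xh) by module] at this
  have hsq : ‖xh + t • (x - xh) - a‖ ^ 2
      = ‖xh - a‖ ^ 2 - 2 * t * ⟪a - xh, x - xh⟫ + t ^ 2 * ‖x - xh‖ ^ 2 := by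
    rw [show xh + t • (x - xh) - a = (xh - a) + t • (x - xh) by abel, norm_add_sq_real,
      inner_smul_right, norm_smul, mul_pow, Real.norm_eq_abs, sq_abs, ← neg_sub a xh,
      inner_neg_left]
    ring
  have hmin_t := hmin (xh + t • (x - xh))
  rw [hsq] at hmin_t
  nlinarith

variable {F g : E → ℝ}

noncomputable def lagrangian (F g : E → ℝ) (x z l : E) : ℝ := F x + g z + ⟪l, x - z⟫

noncomputable def augLagrangian (ρ : ℝ) (F g : E → ℝ) (x z l : E) : ℝ :=
  lagrangian F g x z l + ρ / 2 * ‖x - z‖ ^ 2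

lemma convexOn_lagrangian (hF : ConvexOn ℝ Set.univ F) (hg : ConvexOn ℝ Set.univ g) (l : E) :
    ConvexOn ℝ Set.univ fun p : E × E => lagrangian F g p.1 p.2 l :=
  ((hF.comp_linearMap (LinearMap.fst ℝ E E)).add (hg.comp_linearMap (LinearMap.snd ℝ E E))).add
    (((innerₛₗ ℝ l).comp (LinearMap.fst ℝ E E - LinearMap.snd ℝ E E)).convexOn convex_univ)

lemma lagrangian_average_le (hF : ConvexOn ℝ Set.univ F) (hg : ConvexOn ℝ Set.univ g)
    {ι : Type*} {t : Finset ι} (ht : t.Nonempty) (x z : ι → E) (l : E) :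
    lagrangian F g ((#t : ℝ)⁻¹ • ∑ i ∈ t, x i) ((#t : ℝ)⁻¹ • ∑ i ∈ t, z i) l ≤
      (#t : ℝ)⁻¹ * ∑ i ∈ t, lagrangian F g (x i) (z i) l := by
  simpa [Prod.fst_sum, Prod.snd_sum] using
    (convexOn_lagrangian hF hg l).map_inv_card_smul_sum_le ht fun i => (x i, z i)

lemma subgradient_of_augLagrangian_min_x (hF : ConvexOn ℝ Set.univ F) {x' z l : E}
    (hmin : ∀ x, augLagrangian ρ F g x' z l ≤ augLagrangian ρ F g x z l) (x : E) :
    F x' + ⟪l + ρ • (x' - z), x' - x⟫ ≤ F x := by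
  have := ((hF.add_const (g z)).add (convexOn_inner_sub l z)).prox_subgradient hmin x
  simp only [Pi.add_apply, inner_add_left, inner_sub_left, inner_sub_right,
    real_inner_smul_left] at this ⊢
  linarith

lemma subgradient_of_augLagrangian_min_z (hg : ConvexOn ℝ Set.univ g) {x' z' l : E}
    (hmin : ∀ w, augLagrangian ρ F g x' z' l ≤ augLagrangian ρ F g x' w l) (w : E) :
    g z' + ⟪l + ρ • (x' - z'), w - z'⟫ ≤ g w := by
  have hψ := ((convexOn_const (F x') convex_univ).add hg).add (convexOn_inner_sub (-l) x')
  have := hψ.prox_subgradient (ρ := ρ) (a := x') (xh := z') (fun w => by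
    have := hmin w
    simp only [augLagrangian, lagrangian, Pi.add_apply, inner_neg_left, inner_sub_right,
      norm_sub_rev x'] at this ⊢
    linarith) w
  simp only [Pi.add_apply, inner_neg_left, inner_add_left, inner_sub_left, inner_sub_right,
    real_inner_smul_left] at this ⊢
  linarith

lemma admmLyapunov_sub_eq (hρ : ρ ≠ 0) (ls xs l x' z z' : E) :
    admmLyapunov ρ ls xs l z - admmLyapunov ρ ls xs (l + ρ • (x' - z')) z' =
      ⟪ls, x' - z'⟫ + ⟪l + ρ • (x' - z), xs - x'⟫ + ⟪l + ρ • (x' - z'), z' - xs⟫ +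
        ρ / 2 * ‖x' - z‖ ^ 2 := by
  have hl : ls - (l + ρ • (x' - z')) = (ls - l) - ρ • (x' - z') := by abel
  simp only [admmLyapunov, hl, norm_sub_sq_real, norm_smul, mul_pow, Real.norm_eq_abs, sq_abs,
    inner_add_left, inner_sub_left, inner_sub_right, inner_smul_left, inner_smul_right,
    real_inner_self_eq_norm_sq, RCLike.conj_to_real]
  field_simp
  rw [real_inner_comm xs z, real_inner_comm xs z', real_inner_comm x' z]
  ring

lemma lagrangian_sub_le_admmLyapunov_sub (hρ : 0 < ρ) {ls xs l x' z z' : E}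
    (hFx : F x' + ⟪l + ρ • (x' - z), x' - xs⟫ ≤ F xs)
    (hgz : g z' + ⟪l + ρ • (x' - z'), xs - z'⟫ ≤ g xs) :
    lagrangian F g x' z' ls - lagrangian F g xs xs ls ≤
      admmLyapunov ρ ls xs l z - admmLyapunov ρ ls xs (l + ρ • (x' - z')) z' := by
  rw [admmLyapunov_sub_eq hρ.ne']
  have : 0 ≤ ρ / 2 * ‖x' - z‖ ^ 2 := by positivity
  simp only [lagrangian, sub_self, inner_zero_right, ← neg_sub xs x', ← neg_sub xs z',
    inner_neg_right] at hFx hgz ⊢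
  linarith

end ADMM

theorem admm_ergodic_O_one_over_k_general
    {E : Type*} [NormedAddCommGroup E] [InnerProductSpace ℝ E]
    (F g : E → ℝ) (hF : ConvexOn ℝ Set.univ F) (hg : ConvexOn ℝ Set.univ g)
    (ρ : ℝ) (hρ : 0 < ρ)
    (X z lam : ℕ → E)
    (hX : ∀ k : ℕ, ∀ x : E,
      F (X (k + 1)) + g (z k) + ⟪lam k, X (k + 1) - z k⟫ +
          ρ / 2 * ‖X (k + 1) - z k‖ ^ 2 ≤
        F x + g (z k) + ⟪lam k, x - z k⟫ + ρ / 2 * ‖x - z k‖ ^ 2)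
    (hz : ∀ k : ℕ, ∀ w : E,
      F (X (k + 1)) + g (z (k + 1)) + ⟪lam k, X (k + 1) - z (k + 1)⟫ +
          ρ / 2 * ‖X (k + 1) - z (k + 1)‖ ^ 2 ≤
        F (X (k + 1)) + g w + ⟪lam k, X (k + 1) - w⟫ +
          ρ / 2 * ‖X (k + 1) - w‖ ^ 2)
    (hlam : ∀ k : ℕ, lam (k + 1) = lam k + ρ • (X (k + 1) - z (k + 1)))
    (L : E → E → E → ℝ)
    (hL : ∀ x w l : E, L x w l = F x + g w + ⟪l, x - w⟫)
    (Xs zs lams : E)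
    (hsaddle : ∀ x w l : E, L Xs zs l ≤ L Xs zs lams ∧ L Xs zs lams ≤ L x w lams)
    (hfeas : Xs = zs) :
    ∀ k : ℕ, 1 ≤ k →
      0 ≤ L ((k : ℝ)⁻¹ • ∑ s ∈ Finset.range k, X (s + 1))
            ((k : ℝ)⁻¹ • ∑ s ∈ Finset.range k, z (s + 1)) lams -
          L Xs zs lams ∧
      L ((k : ℝ)⁻¹ • ∑ s ∈ Finset.range k, X (s + 1))
          ((k : ℝ)⁻¹ • ∑ s ∈ Finset.range k, z (s + 1)) lams -
        L Xs zs lams ≤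
        (1 / (k : ℝ)) *
          (1 / (2 * ρ) * ‖lams - lam 0‖ ^ 2 + ρ / 2 * ‖Xs - z 0‖ ^ 2) := by
  obtain rfl : L = lagrangian F g := funext₃ hL
  subst hfeas
  have hstep : ∀ s, lagrangian F g (X (s + 1)) (z (s + 1)) lams - lagrangian F g Xs Xs lams ≤
      admmLyapunov ρ lams Xs (lam s) (z s) - admmLyapunov ρ lams Xs (lam (s + 1)) (z (s + 1)) :=
    fun s => hlam s ▸ lagrangian_sub_le_admmLyapunov_sub hρ
      (subgradient_of_augLagrangian_min_x hF (hX s) Xs)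
      (subgradient_of_augLagrangian_min_z hg (hz s) Xs)
  intro k hk
  have hsum := sum_range_le_of_le_sub_succ hstep (admmLyapunov_nonneg hρ lams Xs (lam k) (z k))
  rw [sum_sub_distrib, sum_const, card_range, nsmul_eq_mul] at hsum
  refine ⟨sub_nonneg.2 (hsaddle _ _ lams).2, ?_⟩
  calc _ ≤ (k : ℝ)⁻¹ * ∑ s ∈ range k, lagrangian F g (X (s + 1)) (z (s + 1)) lams -
        lagrangian F g Xs Xs lams := by
        gcongr
        simpa using lagrangian_average_le hF hg (nonempty_range_iff.2 (by omega))
          (fun s => X (s + 1)) (fun s => z (s + 1)) lams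
    _ ≤ (k : ℝ)⁻¹ * (admmLyapunov ρ lams Xs (lam 0) (z 0) + k * lagrangian F g Xs Xs lams) -
        lagrangian F g Xs Xs lams := by gcongr; linarith
    _ = _ := by
      unfold admmLyapunov
      field_simp
      ring

/-- Theorem 2 of the paper: `O(1/k)` ergodic convergence of ADMM.
Let `(X k, z k, lam k)` be ADMM iterates for convex `F, g` with penalty `ρ > 0`,
and let `(Xs, zs, lams)` be a saddle point of the Lagrangian
`L(x, z, lam) = F x + g z + ⟪lam, x − z⟫` with `Xs = zs`.  Then for every
`k ≥ 1` the ergodic averages `X̄ᵏ = (1/k) ∑_{s<k} X^{s+1}`,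
`z̄ᵏ = (1/k) ∑_{s<k} z^{s+1}` satisfy
`0 ≤ L(X̄ᵏ, z̄ᵏ, lams) − L(Xs, zs, lams)
   ≤ (1/k)((1/(2ρ))‖lams − lam⁰‖² + (ρ/2)‖Xs − z⁰‖²)`. -/
theorem admm_ergodic_O_one_over_k
    {E : Type*} [NormedAddCommGroup E] [InnerProductSpace ℝ E]
    [FiniteDimensional ℝ E]
    (F g : E → ℝ) (hF : ConvexOn ℝ Set.univ F) (hg : ConvexOn ℝ Set.univ g)
    (ρ : ℝ) (hρ : 0 < ρ)
    (X z lam : ℕ → E)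
    (hX : ∀ k : ℕ, ∀ x : E,
      F (X (k + 1)) + g (z k) + ⟪lam k, X (k + 1) - z k⟫ +
          ρ / 2 * ‖X (k + 1) - z k‖ ^ 2 ≤
        F x + g (z k) + ⟪lam k, x - z k⟫ + ρ / 2 * ‖x - z k‖ ^ 2)
    (hz : ∀ k : ℕ, ∀ w : E,
      F (X (k + 1)) + g (z (k + 1)) + ⟪lam k, X (k + 1) - z (k + 1)⟫ +
          ρ / 2 * ‖X (k + 1) - z (k + 1)‖ ^ 2 ≤
        F (X (k + 1)) + g w + ⟪lam k, X (k + 1) - w⟫ +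
          ρ / 2 * ‖X (k + 1) - w‖ ^ 2)
    (hlam : ∀ k : ℕ, lam (k + 1) = lam k + ρ • (X (k + 1) - z (k + 1)))
    (L : E → E → E → ℝ)
    (hL : ∀ x w l : E, L x w l = F x + g w + ⟪l, x - w⟫)
    (Xs zs lams : E)
    (hsaddle : ∀ x w l : E, L Xs zs l ≤ L Xs zs lams ∧ L Xs zs lams ≤ L x w lams)
    (hfeas : Xs = zs) :
    ∀ k : ℕ, 1 ≤ k →
      0 ≤ L ((k : ℝ)⁻¹ • ∑ s ∈ Finset.range k, X (s + 1))
            ((k : ℝ)⁻¹ • ∑ s ∈ Finset.range k, z (s + 1)) lams -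
          L Xs zs lams ∧
      L ((k : ℝ)⁻¹ • ∑ s ∈ Finset.range k, X (s + 1))
          ((k : ℝ)⁻¹ • ∑ s ∈ Finset.range k, z (s + 1)) lams -
        L Xs zs lams ≤
        (1 / (k : ℝ)) *
          (1 / (2 * ρ) * ‖lams - lam 0‖ ^ 2 + ρ / 2 * ‖Xs - z 0‖ ^ 2) :=
  admm_ergodic_O_one_over_k_general F g hF hg ρ hρ X z lam hX hz hlam L hL Xs zs lams hsaddle hfeas
end

section
/- Let E be a finite-dimensional real inner product space, F : E → ℝ differentiable with gradient ∇F, and suppose ∇F is μ-strongly monotone for some μ > 0, i.e., ⟨∇F(a) − ∇F(b), a − b⟩ ≥ μ‖a − b‖² for all a, b ∈ E. Let ρ > 0 and let X^k, X^{k+1}, z^k, λ^k, X*, λ* ∈ E satisfy the optimality conditions ∇F(X*) + λ* = 0 and ∇F(X^{k+1}) + λ^k + ρ(X^{k+1} − z^k) = 0. Then μ‖X^{k+1} − X*‖² ≤ (ρ/2)(‖X^k − X*‖² − ‖X^{k+1} − X*‖²) − (ρ/2)‖X^{k+1} − X^k‖² − ⟨X^{k+1} − X*, (λ^k − λ*)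 + ρ(X^k − z^k)⟩. -/
/-!
Subtracting the two optimality conditions gives
`∇F X1 - ∇F Xs = -((lamk - lams) + ρ (Xk - zk)) - ρ (X1 - Xk)`, so strong monotonicity at
`(X1, Xs)` bounds `μ‖X1 - Xs‖²` by the dual term minus `ρ⟪X1 - Xk, X1 - Xs⟫`, and the
three-point identity turns the latter into the norm terms.
-/

open RealInnerProductSpace

theorem two_mul_inner_sub_sub_eq {E : Type*} [NormedAddCommGroup E] [InnerProductSpace ℝ E]
    (a b c : E) :
    2 * ⟪a - b, a - c⟫ = ‖a - b‖ ^ 2 + ‖a - c‖ ^ 2 - ‖b - c‖ ^ 2 := by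
  have h : ‖(a - c) - (a - b)‖ ^ 2 = ‖a - c‖ ^ 2 - 2 * ⟪a - c, a - b⟫ + ‖a - b‖ ^ 2 :=
    norm_sub_sq_real _ _
  rw [sub_sub_sub_cancel_left, real_inner_comm] at h
  linarith

theorem grad_sub_eq_of_optimality {E : Type*} [AddCommGroup E] [Module ℝ E]
    {g1 gs Xk X1 zk lamk lams : E} {ρ : ℝ}
    (hopt : gs + lams = 0) (hstep : g1 + lamk + ρ • (X1 - zk) = 0) :
    g1 - gs = -((lamk - lams) + ρ • (Xk - zk)) - ρ • (X1 - Xk) := by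
  rw [eq_neg_of_add_eq_zero_left hopt, eq_sub_of_add_eq (eq_neg_of_add_eq_zero_left hstep)]
  module

theorem admm_strong_monotonicity_bound_general
    {E : Type*} [NormedAddCommGroup E] [InnerProductSpace ℝ E]
    (gradF : E → E)
    (μ : ℝ)
    (hmono : ∀ a b : E, μ * ‖a - b‖ ^ 2 ≤ ⟪gradF a - gradF b, a - b⟫)
    (ρ : ℝ)
    (Xk X1 zk lamk Xs lams : E)
    (hopt : gradF Xs + lams = 0)
    (hstep : gradF X1 + lamk + ρ • (X1 - zk) = 0) :
    μ * ‖X1 - Xs‖ ^ 2 ≤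
      ρ / 2 * (‖Xk - Xs‖ ^ 2 - ‖X1 - Xs‖ ^ 2) - ρ / 2 * ‖X1 - Xk‖ ^ 2 -
        ⟪X1 - Xs, (lamk - lams) + ρ • (Xk - zk)⟫ := by
  have hgap := grad_sub_eq_of_optimality (Xk := Xk) hopt hstep
  have hinner : ⟪gradF X1 - gradF Xs, X1 - Xs⟫ =
      -⟪X1 - Xs, (lamk - lams) + ρ • (Xk - zk)⟫ - ρ * ⟪X1 - Xk, X1 - Xs⟫ := by
    rw [hgap, inner_sub_left, inner_neg_left, real_inner_smul_left, real_inner_comm]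
  calc μ * ‖X1 - Xs‖ ^ 2 ≤ ⟪gradF X1 - gradF Xs, X1 - Xs⟫ := hmono X1 Xs
    _ = _ := by linear_combination hinner - ρ / 2 * two_mul_inner_sub_sub_eq X1 Xk Xs

/-- Strong-monotonicity bound, Eq. (47) in the paper.
If `∇F` is `μ`-strongly monotone, `∇F Xs + lams = 0` and
`∇F X1 + lamk + ρ (X1 − zk) = 0`, then
`μ‖X1 − Xs‖² ≤ (ρ/2)(‖Xk − Xs‖² − ‖X1 − Xs‖²) − (ρ/2)‖X1 − Xk‖²
  − ⟪X1 − Xs, (lamk − lams) + ρ(Xk − zk)⟫`. -/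
theorem admm_strong_monotonicity_bound
    {E : Type*} [NormedAddCommGroup E] [InnerProductSpace ℝ E]
    [FiniteDimensional ℝ E]
    (F : E → ℝ) (gradF : E → E) (hgrad : ∀ x : E, HasGradientAt F (gradF x) x)
    (μ : ℝ) (hμ : 0 < μ)
    (hmono : ∀ a b : E, μ * ‖a - b‖ ^ 2 ≤ ⟪gradF a - gradF b, a - b⟫)
    (ρ : ℝ) (hρ : 0 < ρ)
    (Xk X1 zk lamk Xs lams : E)
    (hopt : gradF Xs + lams = 0)
    (hstep : gradF X1 + lamk + ρ • (X1 - zk) = 0) :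
    μ * ‖X1 - Xs‖ ^ 2 ≤
      ρ / 2 * (‖Xk - Xs‖ ^ 2 - ‖X1 - Xs‖ ^ 2) - ρ / 2 * ‖X1 - Xk‖ ^ 2 -
        ⟪X1 - Xs, (lamk - lams) + ρ • (Xk - zk)⟫ :=
  admm_strong_monotonicity_bound_general gradF μ hmono ρ Xk X1 zk lamk Xs lams hopt hstep
end

section
/- Let E be a finite-dimensional real inner product space, F : E → ℝ differentiable with gradient ∇F that is μ-strongly monotone for some μ > 0 (⟨∇F(a) − ∇F(b), a − b⟩ ≥ μ‖a − b‖² for all a, b ∈ E). Let ρ > 0 and let X^k, X^{k+1}, z^k, λ^k, X*, z*, λ* ∈ E satisfy ∇F(X*) + λ* = 0, ∇F(X^{k+1}) + λ^k + ρ(X^{k+1} − z^k) = 0, and X* = z*. Then for every μ₁ with 0 < μ₁ < 2 + 2μ/ρ: ‖X^{k+1} − X*‖ ≤ sqrt( ρ / ( μ₁ ( (2 − μ₁)ρ + 2μ ) ) ) · ‖(1/ρ)(λ^k − λ*) − (z^k − z*)‖, and consequently ‖X^{k+1} − X*‖ ≤ sqrt( ρ / ( μ₁ ( (2 − μ₁)ρ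 + 2μ ) ) ) · ( (1/ρ)‖λ^k − λ*‖ + ‖z^k − z*‖ ). -/
/-!
Subtracting the two optimality conditions and using `X* = z*` gives
`∇F(X^{k+1}) − ∇F(X*) = −ρ (v + u)` with `u = X^{k+1} − X*` and
`v = (1/ρ)(λ^k − λ*) − (z^k − z*)`. Strong monotonicity and Cauchy–Schwarz turn this into
`(μ + ρ)‖u‖² ≤ ρ‖v‖‖u‖`, and Young's inequality `2μ₁‖u‖‖v‖ ≤ μ₁²‖u‖² + ‖v‖²` removes
the cross term, leaving `μ₁((2 − μ₁)ρ + 2μ)‖u‖² ≤ ρ‖v‖²`.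
-/

open RealInnerProductSpace

lemma sq_mul_le_of_add_mul_sq_le_mul {a b μ ρ μ₁ : ℝ} (hρ : 0 ≤ ρ) (hμ₁ : 0 ≤ μ₁)
    (h : (μ + ρ) * a ^ 2 ≤ ρ * (b * a)) :
    a ^ 2 * (μ₁ * ((2 - μ₁) * ρ + 2 * μ)) ≤ ρ * b ^ 2 := by
  nlinarith [mul_le_mul_of_nonneg_left h hμ₁, mul_nonneg hρ (sq_nonneg (μ₁ * a - b))]

lemma le_sqrt_div_mul_of_sq_mul_le {a b c ρ : ℝ} (hb : 0 ≤ b) (hc : 0 < c)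
    (h : a ^ 2 * c ≤ ρ * b ^ 2) :
    a ≤ Real.sqrt (ρ / c) * b := by
  rw [← Real.sqrt_sq hb, ← Real.sqrt_mul' _ (sq_nonneg b)]
  refine Real.le_sqrt_of_sq_le ?_
  rwa [div_mul_eq_mul_div, le_div_iff₀ hc]

lemma admm_rate_denominator_pos {μ ρ μ₁ : ℝ} (hρ : 0 < ρ) (hμ₁ : 0 < μ₁)
    (hμ₁' : μ₁ < 2 + 2 * μ / ρ) :
    0 < μ₁ * ((2 - μ₁) * ρ + 2 * μ) := by
  refine mul_pos hμ₁ ?_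
  have : μ₁ * ρ < 2 * ρ + 2 * μ := by
    calc μ₁ * ρ < (2 + 2 * μ / ρ) * ρ := mul_lt_mul_of_pos_right hμ₁' hρ
      _ = 2 * ρ + 2 * μ := by field_simp
  linarith

section InnerProductSpace

variable {E : Type*} [NormedAddCommGroup E] [InnerProductSpace ℝ E]

lemma add_mul_norm_sq_le_of_le_inner_neg_smul {u v : E} {μ ρ : ℝ} (hρ : 0 ≤ ρ)
    (h : μ * ‖u‖ ^ 2 ≤ ⟪-ρ • (v + u), u⟫) :
    (μ + ρ) * ‖u‖ ^ 2 ≤ ρ * (‖v‖ * ‖u‖) := by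
  rw [neg_smul, inner_neg_left, real_inner_smul_left, inner_add_left,
    real_inner_self_eq_norm_sq] at h
  nlinarith [mul_le_mul_of_nonneg_left (neg_le_of_abs_le (abs_real_inner_le_norm v u)) hρ]

lemma norm_smul_sub_le {ρ : ℝ} (hρ : 0 ≤ ρ) (x y : E) :
    ‖ρ • x - y‖ ≤ ρ * ‖x‖ + ‖y‖ :=
  (norm_sub_le _ _).trans_eq (by rw [norm_smul_of_nonneg hρ])

lemma admm_grad_sub_eq {gradF : E → E} {ρ : ℝ} (hρ : ρ ≠ 0) {X1 zk lamk Xs zs lams : E}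
    (hopt : gradF Xs + lams = 0) (hstep : gradF X1 + lamk + ρ • (X1 - zk) = 0)
    (hfeas : Xs = zs) :
    gradF X1 - gradF Xs = -ρ • ((1 / ρ) • (lamk - lams) - (zk - zs) + (X1 - Xs)) := by
  rw [eq_neg_of_add_eq_zero_left hopt,
    eq_sub_of_add_eq (eq_neg_of_add_eq_zero_left hstep), ← hfeas]
  match_scalars <;> field_simp; ring

end InnerProductSpace

theorem admm_per_step_Rlinear_bound_general
    {E : Type*} [NormedAddCommGroup E] [InnerProductSpace ℝ E]
    (gradF : E → E)
    (μ : ℝ)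
    (hmono : ∀ a b : E, μ * ‖a - b‖ ^ 2 ≤ ⟪gradF a - gradF b, a - b⟫)
    (ρ : ℝ) (hρ : 0 < ρ)
    (X1 zk lamk Xs zs lams : E)
    (hopt : gradF Xs + lams = 0)
    (hstep : gradF X1 + lamk + ρ • (X1 - zk) = 0)
    (hfeas : Xs = zs)
    (μ₁ : ℝ) (hμ₁ : 0 < μ₁) (hμ₁' : μ₁ < 2 + 2 * μ / ρ) :
    ‖X1 - Xs‖ ≤
      Real.sqrt (ρ / (μ₁ * ((2 - μ₁) * ρ + 2 * μ))) *
        ‖(1 / ρ) • (lamk - lams) - (zk - zs)‖ ∧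
    ‖X1 - Xs‖ ≤
      Real.sqrt (ρ / (μ₁ * ((2 - μ₁) * ρ + 2 * μ))) *
        ((1 / ρ) * ‖lamk - lams‖ + ‖zk - zs‖) := by
  have hmono' := hmono X1 Xs
  rw [admm_grad_sub_eq hρ.ne' hopt hstep hfeas] at hmono'
  have hmain := le_sqrt_div_mul_of_sq_mul_le (norm_nonneg _)
    (admm_rate_denominator_pos hρ hμ₁ hμ₁')
    (sq_mul_le_of_add_mul_sq_le_mul hρ.le hμ₁.le
      (add_mul_norm_sq_le_of_le_inner_neg_smul hρ.le hmono'))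
  exact ⟨hmain, hmain.trans (mul_le_mul_of_nonneg_left
    (norm_smul_sub_le (by positivity) _ _) (Real.sqrt_nonneg _))⟩

/-- Eq. (52) of the paper: the per-step R-linear bound.
Under `μ`-strong monotonicity of `∇F`, the ADMM optimality conditions
`∇F Xs + lams = 0`, `∇F X1 + lamk + ρ(X1 − zk) = 0` and feasibility `Xs = zs`,
for every `μ₁` with `0 < μ₁ < 2 + 2μ/ρ`:
`‖X1 − Xs‖ ≤ √(ρ / (μ₁((2 − μ₁)ρ + 2μ))) ‖(1/ρ)(lamk − lams) − (zk − zs)‖`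
and consequently
`‖X1 − Xs‖ ≤ √(ρ / (μ₁((2 − μ₁)ρ + 2μ))) ((1/ρ)‖lamk − lams‖ + ‖zk − zs‖)`. -/
theorem admm_per_step_Rlinear_bound
    {E : Type*} [NormedAddCommGroup E] [InnerProductSpace ℝ E]
    [FiniteDimensional ℝ E]
    (F : E → ℝ) (gradF : E → E) (hgrad : ∀ x : E, HasGradientAt F (gradF x) x)
    (μ : ℝ) (hμ : 0 < μ)
    (hmono : ∀ a b : E, μ * ‖a - b‖ ^ 2 ≤ ⟪gradF a - gradF b, a - b⟫)
    (ρ : ℝ) (hρ : 0 < ρ)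
    (Xk X1 zk lamk Xs zs lams : E)
    (hopt : gradF Xs + lams = 0)
    (hstep : gradF X1 + lamk + ρ • (X1 - zk) = 0)
    (hfeas : Xs = zs)
    (μ₁ : ℝ) (hμ₁ : 0 < μ₁) (hμ₁' : μ₁ < 2 + 2 * μ / ρ) :
    ‖X1 - Xs‖ ≤
      Real.sqrt (ρ / (μ₁ * ((2 - μ₁) * ρ + 2 * μ))) *
        ‖(1 / ρ) • (lamk - lams) - (zk - zs)‖ ∧
    ‖X1 - Xs‖ ≤
      Real.sqrt (ρ / (μ₁ * ((2 - μ₁) * ρ + 2 * μ))) *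
        ((1 / ρ) * ‖lamk - lams‖ + ‖zk - zs‖) :=
  admm_per_step_Rlinear_bound_general gradF μ hmono ρ hρ X1 zk lamk Xs zs lams hopt hstep hfeas μ₁
    hμ₁ hμ₁'
end
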